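/- arXiv:2002.02337 — 10 statements merged into one kernel-verified Lean document; each statement's English description precedes it below -/
import Mathlib

section
/- Let W be a strict contraction on ℂ^d (i.e., ‖W‖ < 1) with defect operators D_W = (I - W*W)^{1/2} and D_{W*} = (I - WW*)^{1/2}. Then for any unitary matrix U ∈ L(ℂ^d), the matrix U' = -W + D_{W*}(I - U W*)^{-1} U D_W satisfies U'(U')* = I, i.e., U' is unitary. -/
open scoped Matrix.Norms.L2Operator ComplexOrder
open Matrix

namespace CrofootAux

open Polynomial

variable {d : ℕ}

/-- Conjugation by a unitary matrix, as an `ℝ`-algebra homomorphism. -/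
noncomputable def conjHom (V : Matrix (Fin d) (Fin d) ℂ) (h1 : Vᴴ * V = 1) (h2 : V * Vᴴ = 1) :
    Matrix (Fin d) (Fin d) ℂ →ₐ[ℝ] Matrix (Fin d) (Fin d) ℂ :=
  AlgHom.mk'
    { toFun := fun x => V * x * Vᴴ
      map_one' := by simpa using h2
      map_mul' := fun x y => by
        calc V * (x * y) * Vᴴ = V * x * (Vᴴ * V) * y * Vᴴ := by rw [h1]; noncomm_ring
        _ = V * x * Vᴴ * (V * y * Vᴴ) := by noncomm_ring
      map_zero' := by simp
      map_add' := fun x y => by noncomm_ring }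
    (fun c x => by simp [Matrix.mul_smul, Matrix.smul_mul])

lemma aeval_conj (V M : Matrix (Fin d) (Fin d) ℂ) (h1 : Vᴴ * V = 1) (h2 : V * Vᴴ = 1)
    (p : ℝ[X]) : aeval (V * M * Vᴴ) p = V * aeval M p * Vᴴ := by
  have h := Polynomial.aeval_algHom_apply (conjHom V h1 h2) M p
  exact h

lemma aeval_diagonal (g : Fin d → ℂ) (p : ℝ[X]) :
    aeval (diagonal g) p = diagonal (fun i => aeval (g i) p) := by
  have h := Polynomial.aeval_algHom_apply
    (Matrix.diagonalAlgHom (R := ℝ) (α := ℂ) (n := Fin d)) g p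
  have h2 : ∀ i, (aeval g p : Fin d → ℂ) i = aeval (g i) p := fun i =>
    (Polynomial.aeval_algHom_apply (Pi.evalAlgHom ℝ (fun _ => ℂ) i) g p).symm
  calc aeval (diagonal g) p = diagonal (aeval g p) := h
  _ = diagonal (fun i => aeval (g i) p) := by
      rw [show (aeval g p : Fin d → ℂ) = fun i => aeval (g i) p from funext h2]

lemma aeval_semiconj (Wm a b : Matrix (Fin d) (Fin d) ℂ) (h : Wm * a = b * Wm) (p : ℝ[X]) :
    Wm * aeval a p = aeval b p * Wm := by
  have hsc : SemiconjBy Wm a b := h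
  induction p using Polynomial.induction_on with
  | C r =>
      simp only [aeval_C]
      exact (Algebra.commutes r Wm).symm
  | add p q hp hq =>
      simp only [map_add, mul_add, add_mul, hp, hq]
  | monomial n r _ =>
      simp only [_root_.map_mul, aeval_C, aeval_X_pow]
      have hp : Wm * a ^ (n + 1) = b ^ (n + 1) * Wm := hsc.pow_right (n + 1)
      calc Wm * (algebraMap ℝ _ r * a ^ (n + 1))
          = algebraMap ℝ _ r * (Wm * a ^ (n + 1)) := by
            rw [← mul_assoc, ← Algebra.commutes, mul_assoc]
      _ = algebraMap ℝ _ r * b ^ (n + 1) * Wm := by rw [hp, mul_assoc]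

lemma exists_sqrt_poly (E : Finset ℝ) (hE : ∀ t ∈ E, 0 ≤ t) :
    ∃ p : ℝ[X], ∀ t ∈ E, p.eval (t ^ 2) = t := by
  refine ⟨Lagrange.interpolate (E.image (· ^ 2)) id Real.sqrt, fun t ht => ?_⟩
  have h := Lagrange.eval_interpolate_at_node (s := E.image (· ^ 2)) (v := id)
    (r := Real.sqrt) (Set.injOn_id _) (Finset.mem_image_of_mem _ ht)
  simpa [Real.sqrt_sq (hE t ht)] using h

lemma aeval_sq_eq (M : Matrix (Fin d) (Fin d) ℂ) (hM : M.PosSemidef) (p : ℝ[X])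
    (hp : ∀ i, p.eval (hM.1.eigenvalues i ^ 2) = hM.1.eigenvalues i) :
    aeval (M ^ 2) p = M := by
  set V : Matrix (Fin d) (Fin d) ℂ := (hM.1.eigenvectorUnitary : Matrix (Fin d) (Fin d) ℂ)
    with hV
  have h1 : Vᴴ * V = 1 := by
    simpa [Matrix.star_eq_conjTranspose] using
      (Matrix.mem_unitaryGroup_iff'.mp (hM.1.eigenvectorUnitary).2)
  have h2 : V * Vᴴ = 1 := by
    simpa [Matrix.star_eq_conjTranspose] using
      (Matrix.mem_unitaryGroup_iff.mp (hM.1.eigenvectorUnitary).2)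
  have spec : M = V * diagonal (fun i => ((hM.1.eigenvalues i : ℝ) : ℂ)) * Vᴴ := by
    have := hM.1.spectral_theorem
    exact this
  have hM2 : M ^ 2 = V * diagonal (fun i => ((hM.1.eigenvalues i : ℝ) : ℂ) *
      ((hM.1.eigenvalues i : ℝ) : ℂ)) * Vᴴ := by
    conv_lhs => rw [pow_two, spec]
    calc (V * diagonal (fun i => ((hM.1.eigenvalues i : ℝ) : ℂ)) * Vᴴ) *
        (V * diagonal (fun i => ((hM.1.eigenvalues i : ℝ) : ℂ)) * Vᴴ)
        = V * (diagonal (fun i => ((hM.1.eigenvalues i : ℝ) : ℂ)) * (Vᴴ * V) *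
            diagonal (fun i => ((hM.1.eigenvalues i : ℝ) : ℂ))) * Vᴴ := by noncomm_ring
    _ = V * diagonal (fun i => ((hM.1.eigenvalues i : ℝ) : ℂ) *
          ((hM.1.eigenvalues i : ℝ) : ℂ)) * Vᴴ := by
        rw [h1, mul_one, diagonal_mul_diagonal]
  rw [hM2, aeval_conj _ _ h1 h2, aeval_diagonal]
  have hdg : (fun i => aeval (((hM.1.eigenvalues i : ℝ) : ℂ) *
        ((hM.1.eigenvalues i : ℝ) : ℂ)) p)
      = fun i => ((hM.1.eigenvalues i : ℝ) : ℂ) := by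
    funext i
    have hc : ((hM.1.eigenvalues i : ℝ) : ℂ) * ((hM.1.eigenvalues i : ℝ) : ℂ)
        = algebraMap ℝ ℂ (hM.1.eigenvalues i ^ 2) := by
      rw [show (algebraMap ℝ ℂ) (hM.1.eigenvalues i ^ 2)
          = ((hM.1.eigenvalues i ^ 2 : ℝ) : ℂ) from rfl]
      push_cast
      ring
    rw [hc, Polynomial.aeval_algebraMap_apply_eq_algebraMap_eval, hp i]
    simp
  rw [hdg, ← spec]

lemma intertwine (W DW DWs : Matrix (Fin d) (Fin d) ℂ)
    (hDW : DW.PosSemidef) (hDW2 : DW ^ 2 = 1 - Wᴴ * W)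
    (hDWs : DWs.PosSemidef) (hDWs2 : DWs ^ 2 = 1 - W * Wᴴ) :
    W * DW = DWs * W := by
  set E : Finset ℝ := (Finset.univ.image hDW.1.eigenvalues) ∪
    (Finset.univ.image hDWs.1.eigenvalues) with hE
  have hEnn : ∀ t ∈ E, 0 ≤ t := by
    intro t ht
    rw [hE, Finset.mem_union] at ht
    rcases ht with ht | ht <;> rw [Finset.mem_image] at ht <;>
      obtain ⟨i, _, rfl⟩ := ht
    · exact hDW.eigenvalues_nonneg i
    · exact hDWs.eigenvalues_nonneg i
  obtain ⟨p, hp⟩ := exists_sqrt_poly E hEnn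
  have e1 : aeval (DW ^ 2) p = DW :=
    aeval_sq_eq DW hDW p fun i => hp _ (by
      rw [hE, Finset.mem_union]
      exact Or.inl (Finset.mem_image_of_mem _ (Finset.mem_univ i)))
  have e2 : aeval (DWs ^ 2) p = DWs :=
    aeval_sq_eq DWs hDWs p fun i => hp _ (by
      rw [hE, Finset.mem_union]
      exact Or.inr (Finset.mem_image_of_mem _ (Finset.mem_univ i)))
  have base : W * DW ^ 2 = DWs ^ 2 * W := by
    rw [hDW2, hDWs2]; noncomm_ring
  have h := aeval_semiconj W (DW ^ 2) (DWs ^ 2) base p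
  rw [e1, e2] at h
  exact h

end CrofootAux

/-- the Crofoot transform of a unitary is unitary. -/
theorem crofoot_unitary {d : ℕ} (W U DW DWs : Matrix (Fin d) (Fin d) ℂ)
    (hW : ‖W‖ < 1)
    (hDW : DW.PosSemidef) (hDW2 : DW ^ 2 = 1 - Wᴴ * W)
    (hDWs : DWs.PosSemidef) (hDWs2 : DWs ^ 2 = 1 - W * Wᴴ)
    (hU1 : Uᴴ * U = 1) (hU2 : U * Uᴴ = 1) :
    (-W + DWs * (1 - U * Wᴴ)⁻¹ * U * DW) * (-W + DWs * (1 - U * Wᴴ)⁻¹ * U * DW)ᴴ = 1 := by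
  -- norm bound for U * Wᴴ
  have hQnorm : ‖U * Wᴴ‖ < 1 := by
    have hstar : star (U * Wᴴ) * (U * Wᴴ) = W * Wᴴ := by
      rw [Matrix.star_eq_conjTranspose]
      calc (U * Wᴴ)ᴴ * (U * Wᴴ) = W * (Uᴴ * U) * Wᴴ := by
            rw [conjTranspose_mul, conjTranspose_conjTranspose]; noncomm_ring
      _ = W * Wᴴ := by rw [hU1, mul_one]
    have h1 : ‖U * Wᴴ‖ * ‖U * Wᴴ‖ = ‖W‖ * ‖W‖ := by
      rw [← Matrix.l2_opNorm_conjTranspose_mul_self (U * Wᴴ),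
        Matrix.star_eq_conjTranspose] at *
      rw [hstar]
      have := Matrix.l2_opNorm_conjTranspose_mul_self Wᴴ
      rw [conjTranspose_conjTranspose, Matrix.l2_opNorm_conjTranspose] at this
      exact this
    nlinarith [norm_nonneg (U * Wᴴ), norm_nonneg W]
  have hunit : IsUnit (1 - U * Wᴴ) := (Units.oneSub _ hQnorm).isUnit
  have hdet : IsUnit (1 - U * Wᴴ).det := (Matrix.isUnit_iff_isUnit_det _).mp hunit
  set A : Matrix (Fin d) (Fin d) ℂ := (1 - U * Wᴴ)⁻¹ with hAdef
  set B : Matrix (Fin d) (Fin d) ℂ := Aᴴ with hBdef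
  have hA1 : A * (1 - U * Wᴴ) = 1 := Matrix.nonsing_inv_mul _ hdet
  have hB1 : (1 - W * Uᴴ) * B = 1 := by
    have h := congrArg conjTranspose hA1
    simpa [conjTranspose_mul, conjTranspose_sub, conjTranspose_one,
      conjTranspose_conjTranspose] using h
  have comm : W * DW = DWs * W :=
    CrofootAux.intertwine W DW DWs hDW hDW2 hDWs hDWs2
  have comm2 : DW * Wᴴ = Wᴴ * DWs := by
    have h := congrArg conjTranspose comm
    simpa [conjTranspose_mul, hDW.1.eq, hDWs.1.eq] using h
  have hDWsq : DW * DW = 1 - Wᴴ * W := by rw [← pow_two, hDW2]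
  have hDWssq : DWs * DWs = 1 - W * Wᴴ := by rw [← pow_two, hDWs2]
  have hT : (-W + DWs * A * U * DW)ᴴ = -Wᴴ + DW * (Uᴴ * (B * DWs)) := by
    rw [hBdef]
    simp only [conjTranspose_add, conjTranspose_neg, conjTranspose_mul,
      hDW.1.eq, hDWs.1.eq]
    try noncomm_ring
  rw [hT]
  have key : A * U * (DW * DW) * Uᴴ * B = B + A * (U * Wᴴ) := by
    calc A * U * (DW * DW) * Uᴴ * B
        = A * (U * Uᴴ) * B - A * (U * Wᴴ * (W * Uᴴ)) * B := by
          rw [hDWsq]; noncomm_ring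
    _ = A * B - A * (U * Wᴴ * (W * Uᴴ)) * B := by rw [hU2, mul_one]
    _ = (A * (1 - U * Wᴴ)) * B + (A * (U * Wᴴ)) * ((1 - W * Uᴴ) * B) := by noncomm_ring
    _ = B + A * (U * Wᴴ) := by rw [hA1, hB1]; noncomm_ring
  calc (-W + DWs * A * U * DW) * (-Wᴴ + DW * (Uᴴ * (B * DWs)))
      = W * Wᴴ - (W * DW) * (Uᴴ * (B * DWs)) - DWs * A * U * (DW * Wᴴ)
        + DWs * (A * U * (DW * DW) * Uᴴ * B) * DWs := by noncomm_ring
  _ = W * Wᴴ - (DWs * W) * (Uᴴ * (B * DWs)) - DWs * A * U * (Wᴴ * DWs)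
        + DWs * (B + A * (U * Wᴴ)) * DWs := by rw [comm, comm2, key]
  _ = W * Wᴴ + DWs * ((1 - W * Uᴴ) * B) * DWs := by noncomm_ring
  _ = W * Wᴴ + DWs * DWs := by rw [hB1]; noncomm_ring
  _ = 1 := by rw [hDWssq]; noncomm_ring
end

section
/- Let W be a strict contraction on ℂ^d. For any contraction A ∈ L(ℂ^d) with ‖A‖ ≤ 1 (so that I - A W* is invertible), define A' = -W + D_{W*}(I - A W*)^{-1} A D_W. Then A = W + D_{W*}(I + A' W*)^{-1} A' D_W, i.e., the generalized Crofoot transform is inverted by the analogous formula with W replaced by -W. -/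
open scoped Matrix.Norms.L2Operator ComplexOrder
open Matrix

/-- If a psd matrix squared has eigenvector `u` with eigenvalue `μ²`, `μ ≥ 0`,
then `u` is an eigenvector of the matrix itself with eigenvalue `μ`. -/
lemma psd_sqrt_eigen {d : ℕ} (Q : Matrix (Fin d) (Fin d) ℂ) (hQ : Q.PosSemidef)
    (u : Fin d → ℂ) (μ : ℝ) (hμ : 0 ≤ μ)
    (hu : (Q * Q) *ᵥ u = ((μ : ℂ) * μ) • u) : Q *ᵥ u = (μ : ℂ) • u := by
  set w : Fin d → ℂ := Q *ᵥ u - (μ : ℂ) • u with hw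
  have h0 : Q *ᵥ w + (μ : ℂ) • w = 0 := by
    rw [hw, mulVec_sub, mulVec_smul, smul_sub, smul_smul, mulVec_mulVec, hu]
    abel
  rcases eq_or_lt_of_le hμ with h | h
  · -- μ = 0
    have hμ0 : (μ : ℂ) = 0 := by exact_mod_cast h.symm
    have hQw : Q *ᵥ w = 0 := by simpa [hμ0] using h0
    have hw' : w = Q *ᵥ u := by simp [hw, hμ0]
    have : star w ⬝ᵥ w = 0 := by
      calc star w ⬝ᵥ w = star u ⬝ᵥ (Qᴴ *ᵥ w) := by
            rw [hw', star_mulVec, ← dotProduct_mulVec]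
        _ = star u ⬝ᵥ (Q *ᵥ w) := by rw [hQ.1]
        _ = 0 := by rw [hQw, dotProduct_zero]
    have := dotProduct_star_self_eq_zero.mp this
    rw [hw, sub_eq_zero] at this
    rw [this, hμ0]
  · -- μ > 0
    have key : star w ⬝ᵥ (Q *ᵥ w) + (μ : ℂ) * (star w ⬝ᵥ w) = 0 := by
      have := congrArg (fun v => star w ⬝ᵥ v) h0
      simpa [dotProduct_add, dotProduct_smul, Complex.real_smul, smul_eq_mul] using this
    have h1 : (0 : ℂ) ≤ star w ⬝ᵥ (Q *ᵥ w) := hQ.dotProduct_mulVec_nonneg w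
    have h2 : (0 : ℂ) ≤ star w ⬝ᵥ w := by
      simpa using (PosSemidef.one (n := Fin d) (R := ℂ)).dotProduct_mulVec_nonneg w
    have hμC : (0 : ℂ) < (μ : ℂ) := by exact_mod_cast h
    have h3 : (0 : ℂ) ≤ (μ : ℂ) * (star w ⬝ᵥ w) := mul_nonneg hμC.le h2
    have hww : (μ : ℂ) * (star w ⬝ᵥ w) = 0 :=
      ((add_eq_zero_iff_of_nonneg h1 h3).mp key).2
    have : star w ⬝ᵥ w = 0 := by
      rcases mul_eq_zero.mp hww with h' | h'
      · exact absurd h' hμC.ne'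
      · exact h'
    have := dotProduct_star_self_eq_zero.mp this
    rw [hw, sub_eq_zero] at this
    exact this

/-- Intertwining of psd square roots: if `W * P² = Q² * W` with `P, Q` psd,
then `W * P = Q * W`. -/
lemma psd_sqrt_intertwine {d : ℕ} (W P Q : Matrix (Fin d) (Fin d) ℂ)
    (hP : P.PosSemidef) (hQ : Q.PosSemidef)
    (h : W * (P * P) = (Q * Q) * W) : W * P = Q * W := by
  have hH := hP.1
  set b := hH.eigenvectorBasis with hb
  have key : ∀ j, (W * P) *ᵥ ⇑(b j) = (Q * W) *ᵥ ⇑(b j) := by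
    intro j
    set μ : ℝ := hH.eigenvalues j with hμdef
    have hμ : 0 ≤ μ := hP.eigenvalues_nonneg j
    have hv : P *ᵥ ⇑(b j) = (μ : ℂ) • ⇑(b j) := by
      have := hH.mulVec_eigenvectorBasis j
      rw [this]
      funext i
      simp [Complex.real_smul, hμdef, hb]
    have hu : (Q * Q) *ᵥ (W *ᵥ ⇑(b j)) = ((μ : ℂ) * μ) • (W *ᵥ ⇑(b j)) := by
      rw [mulVec_mulVec, ← h, ← mulVec_mulVec, ← mulVec_mulVec, hv, mulVec_smul, hv,
        smul_smul, mulVec_smul]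
    have := psd_sqrt_eigen Q hQ (W *ᵥ ⇑(b j)) μ hμ hu
    rw [← mulVec_mulVec, hv, mulVec_smul, ← mulVec_mulVec, this]
  -- conclude matrices are equal since eigenvectors span
  have hall : ∀ x : Fin d → ℂ, (W * P) *ᵥ x = (Q * W) *ᵥ x := by
    intro x
    have hx : x = ∑ i, b.repr (WithLp.toLp 2 x) i • ⇑(b i) := by
      have := b.toBasis.sum_repr (WithLp.toLp 2 x)
      simpa using congrArg (fun v : EuclideanSpace ℂ (Fin d) => (v : Fin d → ℂ)) this.symm
    rw [hx, ← mulVecLin_apply, ← mulVecLin_apply, map_sum, map_sum]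
    refine Finset.sum_congr rfl fun i _ => ?_
    rw [LinearMap.map_smul, LinearMap.map_smul, mulVecLin_apply, mulVecLin_apply, key i]
  ext i j
  have := congrFun (hall (Pi.single j 1)) i
  simpa [mulVec_single] using this

/-- the generalized Crofoot transform is inverted by the analogous
formula with `W` replaced by `-W`. -/
theorem crofoot_inverse_formula {d : ℕ} (W A DW DWs : Matrix (Fin d) (Fin d) ℂ)
    (hW : ‖W‖ < 1) (hA : ‖A‖ ≤ 1)
    (hDW : DW.PosSemidef) (hDW2 : DW ^ 2 = 1 - Wᴴ * W)
    (hDWs : DWs.PosSemidef) (hDWs2 : DWs ^ 2 = 1 - W * Wᴴ) :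
    A = W + DWs * (1 + (-W + DWs * (1 - A * Wᴴ)⁻¹ * A * DW) * Wᴴ)⁻¹ *
          (-W + DWs * (1 - A * Wᴴ)⁻¹ * A * DW) * DW := by
  have hW0 : (0:ℝ) ≤ ‖W‖ := norm_nonneg W
  have hA0 : (0:ℝ) ≤ ‖A‖ := norm_nonneg A
  -- units
  have hAWn : ‖A * Wᴴ‖ < 1 := by
    have h1 := l2_opNorm_mul A Wᴴ
    rw [l2_opNorm_conjTranspose] at h1
    nlinarith
  have hBu : IsUnit (1 - A * Wᴴ) := ⟨Units.oneSub _ hAWn, rfl⟩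
  have hCWn : ‖Wᴴ * W‖ < 1 := by
    have h1 := l2_opNorm_conjTranspose_mul_self W
    nlinarith
  have hCu : IsUnit ((1 : Matrix (Fin d) (Fin d) ℂ) - Wᴴ * W) := ⟨Units.oneSub _ hCWn, rfl⟩
  have hDWn : ‖W * Wᴴ‖ < 1 := by
    have h1 := l2_opNorm_conjTranspose_mul_self Wᴴ
    rw [conjTranspose_conjTranspose, l2_opNorm_conjTranspose] at h1
    nlinarith
  have hDu : IsUnit ((1 : Matrix (Fin d) (Fin d) ℂ) - W * Wᴴ) := ⟨Units.oneSub _ hDWn, rfl⟩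
  have hsqW : DW * DW = 1 - Wᴴ * W := by rw [← pow_two]; exact hDW2
  have hsqS : DWs * DWs = 1 - W * Wᴴ := by rw [← pow_two]; exact hDWs2
  have hDWdet : IsUnit DW.det := by
    have h := (Matrix.isUnit_iff_isUnit_det _).mp hCu
    rw [← hsqW, det_mul] at h
    exact isUnit_of_mul_isUnit_left h
  have hDWsdet : IsUnit DWs.det := by
    have h := (Matrix.isUnit_iff_isUnit_det _).mp hDu
    rw [← hsqS, det_mul] at h
    exact isUnit_of_mul_isUnit_left h
  have hBdet : IsUnit (1 - A * Wᴴ).det := (Matrix.isUnit_iff_isUnit_det _).mp hBu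
  -- intertwining
  have hI : W * DW = DWs * W := by
    apply psd_sqrt_intertwine W DW DWs hDW hDWs
    rw [hsqW, hsqS]
    noncomm_ring
  have hI2 : DW * Wᴴ = Wᴴ * DWs := by
    have h := congrArg conjTranspose hI
    simpa [conjTranspose_mul, hDW.1.eq, hDWs.1.eq] using h
  set B := 1 - A * Wᴴ with hBdef
  have hB1 : B * B⁻¹ = 1 := Matrix.mul_nonsing_inv _ hBdet
  have hB2 : B⁻¹ * B = 1 := Matrix.nonsing_inv_mul _ hBdet
  have hS1 : DWs * DWs⁻¹ = 1 := Matrix.mul_nonsing_inv _ hDWsdet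
  have hS2 : DWs⁻¹ * DWs = 1 := Matrix.nonsing_inv_mul _ hDWsdet
  have h1 : 1 + (-W + DWs * B⁻¹ * A * DW) * Wᴴ = DWs * B⁻¹ * DWs := by
    have e : B⁻¹ * (A * Wᴴ) = B⁻¹ - 1 := by
      have hAW : A * Wᴴ = 1 - B := by rw [hBdef]; noncomm_ring
      rw [hAW, mul_sub, mul_one, hB2]
    calc 1 + (-W + DWs * B⁻¹ * A * DW) * Wᴴ
        = 1 - W * Wᴴ + DWs * (B⁻¹ * (A * (DW * Wᴴ))) := by noncomm_ring
      _ = 1 - W * Wᴴ + DWs * ((B⁻¹ * (A * Wᴴ)) * DWs) := by rw [hI2]; noncomm_ring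
      _ = 1 - W * Wᴴ + DWs * ((B⁻¹ - 1) * DWs) := by rw [e]
      _ = 1 - W * Wᴴ + (DWs * B⁻¹ * DWs - DWs * DWs) := by noncomm_ring
      _ = DWs * B⁻¹ * DWs := by rw [hsqS]; noncomm_ring
  rw [h1]
  have hinv : (DWs * B⁻¹ * DWs)⁻¹ = DWs⁻¹ * B * DWs⁻¹ := by
    rw [Matrix.mul_inv_rev, Matrix.mul_inv_rev, Matrix.nonsing_inv_nonsing_inv _ hBdet]
    noncomm_ring
  rw [hinv]
  have inner : DWs⁻¹ * (-W + DWs * B⁻¹ * A * DW) * DW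
      = -W + B⁻¹ * (A * (1 - Wᴴ * W)) := by
    calc DWs⁻¹ * (-W + DWs * B⁻¹ * A * DW) * DW
        = -(DWs⁻¹ * (W * DW)) + (DWs⁻¹ * DWs) * (B⁻¹ * (A * (DW * DW))) := by noncomm_ring
      _ = -(DWs⁻¹ * (DWs * W)) + 1 * (B⁻¹ * (A * (1 - Wᴴ * W))) := by rw [hI, hS2, hsqW]
      _ = -((DWs⁻¹ * DWs) * W) + B⁻¹ * (A * (1 - Wᴴ * W)) := by rw [one_mul, mul_assoc]
      _ = -W + B⁻¹ * (A * (1 - Wᴴ * W)) := by rw [hS2, one_mul]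
  calc A = W + B * (-W + B⁻¹ * (A * (1 - Wᴴ * W))) := by
        have : B * (-W + B⁻¹ * (A * (1 - Wᴴ * W)))
            = -(B * W) + (B * B⁻¹) * (A * (1 - Wᴴ * W)) := by noncomm_ring
        rw [this, hB1, one_mul, hBdef]
        noncomm_ring
    _ = W + B * (DWs⁻¹ * (-W + DWs * B⁻¹ * A * DW) * DW) := by rw [inner]
    _ = W + DWs * (DWs⁻¹ * B * DWs⁻¹) * (-W + DWs * B⁻¹ * A * DW) * DW := by
        have : DWs * (DWs⁻¹ * B * DWs⁻¹) * (-W + DWs * B⁻¹ * A * DW) * DW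
            = (DWs * DWs⁻¹) * (B * (DWs⁻¹ * (-W + DWs * B⁻¹ * A * DW) * DW)) := by
          noncomm_ring
        rw [this, hS1, one_mul, mul_assoc]
end

section
/- Let W be a strict contraction on ℂ^d and A, B ∈ L(ℂ^d) contractions with A' = -W + D_{W*}(I - A W*)^{-1} A D_W and B' = -W + D_{W*}(I - B W*)^{-1} B D_W. Then I - A'(B')* = D_{W*}(I - A W*)^{-1}(I - A B*)(I - W B*)^{-1} D_{W*}. -/
open scoped Matrix.Norms.L2Operator ComplexOrder
open Matrix

private lemma crofoot_trace_nonneg {d : ℕ} (M : Matrix (Fin d) (Fin d) ℂ) :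
    0 ≤ (Mᴴ * M).trace := by
  refine Finset.sum_nonneg fun j _ => ?_
  simp only [Matrix.diag_apply, Matrix.mul_apply, Matrix.conjTranspose_apply]
  exact Finset.sum_nonneg fun i _ => star_mul_self_nonneg _

private lemma crofoot_trace_eq_zero {d : ℕ} {M : Matrix (Fin d) (Fin d) ℂ}
    (h : (Mᴴ * M).trace = 0) : M = 0 := by
  have h1 : ∀ j ∈ Finset.univ, (0:ℂ) ≤ (Mᴴ * M).diag j := by
    intro j _
    simp only [Matrix.diag_apply, Matrix.mul_apply, Matrix.conjTranspose_apply]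
    exact Finset.sum_nonneg fun i _ => star_mul_self_nonneg _
  have h2 := (Finset.sum_eq_zero_iff_of_nonneg h1).mp h
  ext i j
  have h3 := h2 j (Finset.mem_univ j)
  simp only [Matrix.diag_apply, Matrix.mul_apply, Matrix.conjTranspose_apply] at h3
  have h4 := (Finset.sum_eq_zero_iff_of_nonneg
    (fun i _ => star_mul_self_nonneg (M i j))).mp h3 i (Finset.mem_univ i)
  rcases mul_eq_zero.mp h4 with h5 | h5
  · simpa using star_eq_zero.mp h5
  · simpa using h5

open scoped MatrixOrder in
/-- The intertwining relation `W D_W = D_{W*} W`. -/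
private lemma crofoot_intertwine {d : ℕ} (W DW DWs : Matrix (Fin d) (Fin d) ℂ)
    (hW : ‖W‖ < 1)
    (hDW : DW.PosSemidef) (hDW2 : DW ^ 2 = 1 - Wᴴ * W)
    (hDWs : DWs.PosSemidef) (hDWs2 : DWs ^ 2 = 1 - W * Wᴴ) :
    W * DW = DWs * W := by
  have hDW2' : DW * DW = 1 - Wᴴ * W := by rw [← pow_two]; exact hDW2
  have hDWs2' : DWs * DWs = 1 - W * Wᴴ := by rw [← pow_two]; exact hDWs2
  -- DW is invertible
  have hu : IsUnit (1 - Wᴴ * W) := by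
    have h : ‖Wᴴ * W‖ < 1 := by
      calc ‖Wᴴ * W‖ ≤ ‖Wᴴ‖ * ‖W‖ := norm_mul_le _ _
      _ = ‖W‖ * ‖W‖ := by rw [Matrix.l2_opNorm_conjTranspose]
      _ < 1 := by nlinarith [norm_nonneg W]
    exact (Units.oneSub _ h).isUnit
  have hDWdet : IsUnit DW.det := by
    have : IsUnit (DW.det ^ 2) := by
      rw [← Matrix.det_pow, hDW2]
      exact ((Matrix.isUnit_iff_isUnit_det _).mp hu)
    exact (isUnit_pow_iff two_ne_zero).mp this
  set S := W * DW - DWs * W with hSdef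
  have hS : DWs * S + S * DW = 0 := by
    calc DWs * (W * DW - DWs * W) + (W * DW - DWs * W) * DW
        = W * (DW * DW) - (DWs * DWs) * W := by noncomm_ring
      _ = W * (1 - Wᴴ * W) - (1 - W * Wᴴ) * W := by rw [hDW2', hDWs2']
      _ = 0 := by noncomm_ring
  set E := CFC.sqrt DW with hEdef
  set F := CFC.sqrt DWs with hFdef
  have hE : E * E = DW := CFC.sqrt_mul_sqrt_self DW hDW.nonneg
  have hF : F * F = DWs := CFC.sqrt_mul_sqrt_self DWs hDWs.nonneg
  have hEH : Eᴴ = E := (CFC.sqrt_nonneg DW).posSemidef.1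
  have hFH : Fᴴ = F := (CFC.sqrt_nonneg DWs).posSemidef.1
  have t1 : (F * S)ᴴ * (F * S) = Sᴴ * (DWs * S) := by
    rw [conjTranspose_mul, hFH, ← hF]; noncomm_ring
  have e1 : (S * E)ᴴ * (S * E) = E * (Sᴴ * S * E) := by
    rw [conjTranspose_mul, hEH]; noncomm_ring
  have e2 : (Sᴴ * S * E) * E = Sᴴ * (S * DW) := by
    rw [← hE]; noncomm_ring
  have t2 : ((S * E)ᴴ * (S * E)).trace = (Sᴴ * (S * DW)).trace := by
    rw [e1, Matrix.trace_mul_comm, e2]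
  have h0 : ((F * S)ᴴ * (F * S)).trace + ((S * E)ᴴ * (S * E)).trace = 0 := by
    rw [t1, t2, ← Matrix.trace_add]
    have : Sᴴ * (DWs * S) + Sᴴ * (S * DW) = Sᴴ * (DWs * S + S * DW) := by noncomm_ring
    rw [this, hS, mul_zero, Matrix.trace_zero]
  have hSE : S * E = 0 := by
    have n1 := crofoot_trace_nonneg (F * S)
    have n2 := crofoot_trace_nonneg (S * E)
    have : ((S * E)ᴴ * (S * E)).trace = 0 := le_antisymm (by
      have : ((S * E)ᴴ * (S * E)).trace = -((F * S)ᴴ * (F * S)).trace := by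
        linear_combination h0
      rw [this]
      simpa using n1) n2
    exact crofoot_trace_eq_zero this
  have hEdet : IsUnit E.det := by
    have : IsUnit (E.det ^ 2) := by
      rw [pow_two, ← Matrix.det_mul, hE]; exact hDWdet
    exact (isUnit_pow_iff two_ne_zero).mp this
  have hS0 : S = 0 := by
    calc S = S * E * E⁻¹ := by rw [Matrix.mul_nonsing_inv_cancel_right _ _ hEdet]
    _ = 0 := by rw [hSE, zero_mul]
  have := sub_eq_zero.mp hS0
  exact this

/-- the kernel identity
`I - A'(B')* = D_{W*}(I - AW*)⁻¹(I - AB*)(I - WB*)⁻¹D_{W*}` for the Crofoot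
transforms `A'`, `B'` of contractions `A`, `B`. -/

theorem crofoot_kernel_identity {d : ℕ} (W A B DW DWs : Matrix (Fin d) (Fin d) ℂ)
    (hW : ‖W‖ < 1) (hA : ‖A‖ ≤ 1) (hB : ‖B‖ ≤ 1)
    (hDW : DW.PosSemidef) (hDW2 : DW ^ 2 = 1 - Wᴴ * W)
    (hDWs : DWs.PosSemidef) (hDWs2 : DWs ^ 2 = 1 - W * Wᴴ) :
    1 - (-W + DWs * (1 - A * Wᴴ)⁻¹ * A * DW) * (-W + DWs * (1 - B * Wᴴ)⁻¹ * B * DW)ᴴ =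
      DWs * (1 - A * Wᴴ)⁻¹ * (1 - A * Bᴴ) * (1 - W * Bᴴ)⁻¹ * DWs := by
  have hDW2' : DW * DW = 1 - Wᴴ * W := by rw [← pow_two]; exact hDW2
  have hDWs2' : DWs * DWs = 1 - W * Wᴴ := by rw [← pow_two]; exact hDWs2
  have hcomm : W * DW = DWs * W := crofoot_intertwine W DW DWs hW hDW hDW2 hDWs hDWs2
  have hcommT : DW * Wᴴ = Wᴴ * DWs := by
    have h := congrArg conjTranspose hcomm
    simpa only [conjTranspose_mul, hDW.1.eq, hDWs.1.eq] using h
  have hnW : (0:ℝ) ≤ ‖W‖ := norm_nonneg W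
  -- invertibility of the three resolvents
  have hAW : IsUnit (1 - A * Wᴴ).det := by
    refine (Matrix.isUnit_iff_isUnit_det _).mp (Units.oneSub _ ?_).isUnit
    calc ‖A * Wᴴ‖ ≤ ‖A‖ * ‖Wᴴ‖ := norm_mul_le _ _
    _ = ‖A‖ * ‖W‖ := by rw [Matrix.l2_opNorm_conjTranspose]
    _ < 1 := by nlinarith
  have hWB : IsUnit (1 - W * Bᴴ).det := by
    refine (Matrix.isUnit_iff_isUnit_det _).mp (Units.oneSub _ ?_).isUnit
    calc ‖W * Bᴴ‖ ≤ ‖W‖ * ‖Bᴴ‖ := norm_mul_le _ _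
    _ = ‖W‖ * ‖B‖ := by rw [Matrix.l2_opNorm_conjTranspose]
    _ < 1 := by nlinarith
  have hXP : (1 - A * Wᴴ)⁻¹ * (1 - A * Wᴴ) = 1 := Matrix.nonsing_inv_mul _ hAW
  have hPX : (1 - A * Wᴴ) * (1 - A * Wᴴ)⁻¹ = 1 := Matrix.mul_nonsing_inv _ hAW
  have hQZ : (1 - W * Bᴴ) * (1 - W * Bᴴ)⁻¹ = 1 := Matrix.mul_nonsing_inv _ hWB
  have hZQ : (1 - W * Bᴴ)⁻¹ * (1 - W * Bᴴ) = 1 := Matrix.nonsing_inv_mul _ hWB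
  set X := (1 - A * Wᴴ)⁻¹ with hXdef
  set Z := (1 - W * Bᴴ)⁻¹ with hZdef
  -- conjugate transpose of the inverse
  have hZH : ((1 - B * Wᴴ)⁻¹)ᴴ = Z := by
    rw [Matrix.conjTranspose_nonsing_inv, hZdef]
    congr 1
    simp [conjTranspose_sub, conjTranspose_mul]
  -- simplify B'ᴴ
  have hBH : (-W + DWs * (1 - B * Wᴴ)⁻¹ * B * DW)ᴴ = -Wᴴ + DW * (Bᴴ * Z * DWs) := by
    simp only [conjTranspose_add, conjTranspose_neg, conjTranspose_mul, hZH, hDW.1.eq, hDWs.1.eq]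
    noncomm_ring
  -- the key resolvent identity
  have cancel : ∀ T : Matrix (Fin d) (Fin d) ℂ,
      X * ((1 - A * Wᴴ) * T * (1 - W * Bᴴ)) * Z = T := by
    intro T
    calc X * ((1 - A * Wᴴ) * T * (1 - W * Bᴴ)) * Z
        = (X * (1 - A * Wᴴ)) * T * ((1 - W * Bᴴ) * Z) := by noncomm_ring
    _ = T := by rw [hXP, hQZ, one_mul, mul_one]
  have key1 : (1 - A * Wᴴ) *
      (1 + W * (Bᴴ * Z) + X * (A * Wᴴ) - X * (A * Bᴴ) * Z + X * (A * (Wᴴ * W) * Bᴴ) * Z) *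
      (1 - W * Bᴴ) = 1 - A * Bᴴ := by
    calc (1 - A * Wᴴ) *
        (1 + W * (Bᴴ * Z) + X * (A * Wᴴ) - X * (A * Bᴴ) * Z + X * (A * (Wᴴ * W) * Bᴴ) * Z) *
        (1 - W * Bᴴ)
        = ((1 - A * Wᴴ) + (1 - A * Wᴴ) * (W * Bᴴ) * Z + ((1 - A * Wᴴ) * X) * (A * Wᴴ)
            - ((1 - A * Wᴴ) * X) * (A * Bᴴ) * Z + ((1 - A * Wᴴ) * X) * (A * (Wᴴ * W) * Bᴴ) * Z)
            * (1 - W * Bᴴ) := by noncomm_ring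
      _ = ((1 - A * Wᴴ) + (1 - A * Wᴴ) * (W * Bᴴ) * Z + (A * Wᴴ)
            - (A * Bᴴ) * Z + (A * (Wᴴ * W) * Bᴴ) * Z) * (1 - W * Bᴴ) := by
          rw [hPX]; noncomm_ring
      _ = (1 - A * Wᴴ) * (1 - W * Bᴴ) + (1 - A * Wᴴ) * (W * Bᴴ) * (Z * (1 - W * Bᴴ))
            + (A * Wᴴ) * (1 - W * Bᴴ) - (A * Bᴴ) * (Z * (1 - W * Bᴴ))
            + (A * (Wᴴ * W) * Bᴴ) * (Z * (1 - W * Bᴴ)) := by noncomm_ring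
      _ = 1 - A * Bᴴ := by rw [hZQ]; noncomm_ring
  have key : X * (1 - A * Bᴴ) * Z
      = 1 + W * (Bᴴ * Z) + X * (A * Wᴴ) - X * (A * Bᴴ) * Z + X * (A * (Wᴴ * W) * Bᴴ) * Z := by
    conv_lhs => rw [← key1]
    exact cancel _
  -- main computation
  rw [hBH]
  calc 1 - (-W + DWs * X * A * DW) * (-Wᴴ + DW * (Bᴴ * Z * DWs))
      = (1 - W * Wᴴ) + (W * DW) * (Bᴴ * Z * DWs) + DWs * (X * A) * (DW * Wᴴ)
        - DWs * (X * A) * (DW * DW) * (Bᴴ * Z * DWs) := by noncomm_ring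
    _ = (DWs * DWs) + (DWs * W) * (Bᴴ * Z * DWs) + DWs * (X * A) * (Wᴴ * DWs)
        - DWs * (X * A) * (1 - Wᴴ * W) * (Bᴴ * Z * DWs) := by
        rw [← hDWs2', hcomm, hcommT, hDW2']
    _ = DWs * (1 + W * (Bᴴ * Z) + X * (A * Wᴴ) - X * (A * Bᴴ) * Z + X * (A * (Wᴴ * W) * Bᴴ) * Z)
        * DWs := by noncomm_ring
    _ = DWs * (X * (1 - A * Bᴴ) * Z) * DWs := by rw [key]
    _ = DWs * X * (1 - A * Bᴴ) * Z * DWs := by noncomm_ring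
end

section
/- Let W be a strict contraction on ℂ^d and A, B ∈ L(ℂ^d) contractions with A' = -W + D_{W*}(I - A W*)^{-1} A D_W and B' = -W + D_{W*}(I - B W*)^{-1} B D_W. Then A' - B' = D_{W*}(I - A W*)^{-1}(A - B)(I - W* B)^{-1} D_W. -/
open scoped Matrix.Norms.L2Operator ComplexOrder
open Matrix

/-- the difference identity
`A' - B' = D_{W*}(I - AW*)⁻¹(A - B)(I - W*B)⁻¹D_W` for Crofoot transforms. -/
theorem crofoot_difference_identity {d : ℕ} (W A B DW DWs : Matrix (Fin d) (Fin d) ℂ)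
    (hW : ‖W‖ < 1) (hA : ‖A‖ ≤ 1) (hB : ‖B‖ ≤ 1)
    (hDW : DW.PosSemidef) (hDW2 : DW ^ 2 = 1 - Wᴴ * W)
    (hDWs : DWs.PosSemidef) (hDWs2 : DWs ^ 2 = 1 - W * Wᴴ) :
    (-W + DWs * (1 - A * Wᴴ)⁻¹ * A * DW) - (-W + DWs * (1 - B * Wᴴ)⁻¹ * B * DW) =
      DWs * (1 - A * Wᴴ)⁻¹ * (A - B) * (1 - Wᴴ * B)⁻¹ * DW := by
  have hWc : ‖Wᴴ‖ < 1 := by rwa [Matrix.l2_opNorm_conjTranspose]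
  have key : ∀ X Y : Matrix (Fin d) (Fin d) ℂ, ‖X‖ ≤ 1 → ‖Y‖ < 1 →
      IsUnit (1 - X * Y) := by
    intro X Y hX hY
    have h : ‖X * Y‖ < 1 := lt_of_le_of_lt (norm_mul_le X Y)
      (by nlinarith [norm_nonneg X, norm_nonneg Y])
    exact (Units.oneSub _ h).isUnit
  have key' : ∀ X Y : Matrix (Fin d) (Fin d) ℂ, ‖X‖ < 1 → ‖Y‖ ≤ 1 →
      IsUnit (1 - X * Y) := by
    intro X Y hX hY
    have h : ‖X * Y‖ < 1 := lt_of_le_of_lt (norm_mul_le X Y)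
      (by nlinarith [norm_nonneg X, norm_nonneg Y])
    exact (Units.oneSub _ h).isUnit
  have hu : IsUnit (1 - A * Wᴴ) := key A Wᴴ hA hWc
  have hw : IsUnit (1 - B * Wᴴ) := key B Wᴴ hB hWc
  have hv : IsUnit (1 - Wᴴ * B) := key' Wᴴ B hWc hB
  have hu1 : (1 - A * Wᴴ)⁻¹ * (1 - A * Wᴴ) = 1 :=
    Matrix.nonsing_inv_mul _ ((Matrix.isUnit_iff_isUnit_det _).mp hu)
  have hu2 : (1 - A * Wᴴ) * (1 - A * Wᴴ)⁻¹ = 1 :=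
    Matrix.mul_nonsing_inv _ ((Matrix.isUnit_iff_isUnit_det _).mp hu)
  have hw1 : (1 - B * Wᴴ)⁻¹ * (1 - B * Wᴴ) = 1 :=
    Matrix.nonsing_inv_mul _ ((Matrix.isUnit_iff_isUnit_det _).mp hw)
  have hv2 : (1 - Wᴴ * B) * (1 - Wᴴ * B)⁻¹ = 1 :=
    Matrix.mul_nonsing_inv _ ((Matrix.isUnit_iff_isUnit_det _).mp hv)
  -- w⁻¹ * B = B * v⁻¹
  have hcomm : (1 - B * Wᴴ)⁻¹ * B = B * (1 - Wᴴ * B)⁻¹ := by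
    have h1 : B * (1 - Wᴴ * B) = (1 - B * Wᴴ) * B := by noncomm_ring
    calc (1 - B * Wᴴ)⁻¹ * B
        = (1 - B * Wᴴ)⁻¹ * (B * (1 - Wᴴ * B) * (1 - Wᴴ * B)⁻¹) := by
          rw [mul_assoc, hv2, mul_one]
      _ = ((1 - B * Wᴴ)⁻¹ * (1 - B * Wᴴ)) * (B * (1 - Wᴴ * B)⁻¹) := by
          rw [h1]; noncomm_ring
      _ = B * (1 - Wᴴ * B)⁻¹ := by rw [hw1, one_mul]
  have main : (1 - A * Wᴴ)⁻¹ * A - (1 - B * Wᴴ)⁻¹ * B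
      = (1 - A * Wᴴ)⁻¹ * (A - B) * (1 - Wᴴ * B)⁻¹ := by
    rw [hcomm]
    have hAB : A * (1 - Wᴴ * B) - (1 - A * Wᴴ) * B = A - B := by noncomm_ring
    calc (1 - A * Wᴴ)⁻¹ * A - B * (1 - Wᴴ * B)⁻¹
        = (1 - A * Wᴴ)⁻¹ * (A * (1 - Wᴴ * B)) * (1 - Wᴴ * B)⁻¹
            - (1 - A * Wᴴ)⁻¹ * ((1 - A * Wᴴ) * B) * (1 - Wᴴ * B)⁻¹ := by
          rw [mul_assoc _ (A * (1 - Wᴴ * B)), mul_assoc A, hv2, mul_one,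
            ← mul_assoc _ (1 - A * Wᴴ), hu1, one_mul]
      _ = (1 - A * Wᴴ)⁻¹ * (A * (1 - Wᴴ * B) - (1 - A * Wᴴ) * B) * (1 - Wᴴ * B)⁻¹ := by
          rw [← Matrix.sub_mul, ← Matrix.mul_sub]
      _ = (1 - A * Wᴴ)⁻¹ * (A - B) * (1 - Wᴴ * B)⁻¹ := by rw [hAB]
  calc (-W + DWs * (1 - A * Wᴴ)⁻¹ * A * DW) - (-W + DWs * (1 - B * Wᴴ)⁻¹ * B * DW)
      = DWs * ((1 - A * Wᴴ)⁻¹ * A - (1 - B * Wᴴ)⁻¹ * B) * DW := by noncomm_ring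
    _ = DWs * (1 - A * Wᴴ)⁻¹ * (A - B) * (1 - Wᴴ * B)⁻¹ * DW := by rw [main]; noncomm_ring
end

section
/- Let W be a strict contraction on ℂ^d and U ∈ L(ℂ^d) unitary with U' = -W + D_{W*}(I - U W*)^{-1} U D_W. Then D_{W*}(I + U' W*)^{-1} D_{W*} (I - U W*)^{-1} = I, i.e., the map x ↦ D_{W*}(I + U'W*)^{-1} x is the inverse of x ↦ D_{W*}(I - U W*)^{-1} x. -/
open scoped Matrix.Norms.L2Operator ComplexOrder
open Matrix

/-- Intertwining of positive semidefinite square roots: if `A² X = X B²` with `A, B` psd,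
then `A X = X B`. -/
lemma psd_sqrt_intertwine_s5 {d : ℕ} (A B X : Matrix (Fin d) (Fin d) ℂ)
    (hA : A.PosSemidef) (hB : B.PosSemidef)
    (h : A * A * X = X * (B * B)) : A * X = X * B := by
  have hAh : A.IsHermitian := hA.1
  have hBh : B.IsHermitian := hB.1
  set P : Matrix (Fin d) (Fin d) ℂ := (hAh.eigenvectorUnitary : Matrix (Fin d) (Fin d) ℂ) with hP
  set Q : Matrix (Fin d) (Fin d) ℂ := (hBh.eigenvectorUnitary : Matrix (Fin d) (Fin d) ℂ) with hQ
  have hPu : star P * P = 1 := by simp [hP]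
  have hPu' : P * star P = 1 := by simp [hP]
  have hQu : star Q * Q = 1 := by simp [hQ]
  have hQu' : Q * star Q = 1 := by simp [hQ]
  set DA : Matrix (Fin d) (Fin d) ℂ :=
    diagonal (RCLike.ofReal ∘ hAh.eigenvalues) with hDA
  set DB : Matrix (Fin d) (Fin d) ℂ :=
    diagonal (RCLike.ofReal ∘ hBh.eigenvalues) with hDB
  have hAspec : A = P * DA * star P := hAh.spectral_theorem
  have hBspec : B = Q * DB * star Q := hBh.spectral_theorem
  set Y : Matrix (Fin d) (Fin d) ℂ := star P * X * Q with hY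
  -- intertwining relations for the unitaries
  have hPA : star P * A = DA * star P := by
    rw [hAspec]
    calc star P * (P * DA * star P) = (star P * P) * (DA * star P) := by noncomm_ring
      _ = DA * star P := by rw [hPu, one_mul]
  have hBQ : B * Q = Q * DB := by
    rw [hBspec]
    calc Q * DB * star Q * Q = (Q * DB) * (star Q * Q) := by noncomm_ring
      _ = Q * DB := by rw [hQu, mul_one]
  have hXY : X = P * Y * star Q := by
    rw [hY]
    calc X = (P * star P) * X * (Q * star Q) := by rw [hPu', hQu']; simp
      _ = P * (star P * X * Q) * star Q := by noncomm_ring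
  -- reduce the hypothesis to diagonal form
  have hdiag : DA * DA * Y = Y * (DB * DB) := by
    have h1 : star P * (A * A * X) * Q = DA * DA * Y := by
      calc star P * (A * A * X) * Q = (star P * A) * A * X * Q := by noncomm_ring
        _ = (DA * star P) * A * X * Q := by rw [hPA]
        _ = DA * (star P * A) * X * Q := by noncomm_ring
        _ = DA * (DA * star P) * X * Q := by rw [hPA]
        _ = DA * DA * Y := by rw [hY]; noncomm_ring
    have h2 : star P * (X * (B * B)) * Q = Y * (DB * DB) := by
      calc star P * (X * (B * B)) * Q = star P * X * (B * (B * Q)) := by noncomm_ring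
        _ = star P * X * (B * (Q * DB)) := by rw [hBQ]
        _ = star P * X * ((B * Q) * DB) := by noncomm_ring
        _ = star P * X * ((Q * DB) * DB) := by rw [hBQ]
        _ = Y * (DB * DB) := by rw [hY]; noncomm_ring
    rw [← h1, ← h2, h]
  -- entrywise
  have hdiag' : DA * Y = Y * DB := by
    ext i j
    have hij := congrFun (congrFun hdiag i) j
    simp only [hDA, hDB, Matrix.diagonal_mul_diagonal, Matrix.diagonal_mul,
      Matrix.mul_diagonal, Function.comp_apply, Pi.mul_apply] at hij ⊢
    rcases eq_or_ne (Y i j) 0 with hy | hy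
    · simp [hy]
    · have hsq : (RCLike.ofReal (hAh.eigenvalues i) : ℂ) * RCLike.ofReal (hAh.eigenvalues i)
          = (RCLike.ofReal (hBh.eigenvalues j) : ℂ) * RCLike.ofReal (hBh.eigenvalues j) :=
        mul_right_cancel₀ hy (by linear_combination hij)
      have hsqR : (hAh.eigenvalues i) * (hAh.eigenvalues i)
          = (hBh.eigenvalues j) * (hBh.eigenvalues j) := by
        have := congrArg Complex.re hsq
        simpa [RCLike.ofReal_alg] using this
      have h1 : (0:ℝ) ≤ hAh.eigenvalues i := hA.eigenvalues_nonneg i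
      have h2 : (0:ℝ) ≤ hBh.eigenvalues j := hB.eigenvalues_nonneg j
      have heq : hAh.eigenvalues i = hBh.eigenvalues j := by nlinarith
      rw [heq, mul_comm]
  calc A * X = (A * P) * Y * star Q := by
        conv_lhs => rw [hXY]
        noncomm_ring
    _ = (P * DA) * Y * star Q := by
        have hDAH : star DA = DA := by
          rw [hDA, Matrix.star_eq_conjTranspose, Matrix.diagonal_conjTranspose]
          have : star (RCLike.ofReal ∘ hAh.eigenvalues : Fin d → ℂ)
              = RCLike.ofReal ∘ hAh.eigenvalues := by
            funext i
            simp [Pi.star_apply, RCLike.star_def, RCLike.conj_ofReal]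
          rw [this]
        have hAP : A * P = P * DA := by
          have h' := congrArg star hPA
          rw [Matrix.star_mul, Matrix.star_mul, star_star, hDAH] at h'
          rwa [Matrix.star_eq_conjTranspose A, hAh.eq] at h'
        rw [hAP]
    _ = P * (Y * DB) * star Q := by rw [← hdiag']; noncomm_ring
    _ = P * Y * (star Q * B) := by
        have hDBH : star DB = DB := by
          rw [hDB, Matrix.star_eq_conjTranspose, Matrix.diagonal_conjTranspose]
          have : star (RCLike.ofReal ∘ hBh.eigenvalues : Fin d → ℂ)
              = RCLike.ofReal ∘ hBh.eigenvalues := by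
            funext i
            simp [Pi.star_apply, RCLike.star_def, RCLike.conj_ofReal]
          rw [this]
        have hQB : star Q * B = DB * star Q := by
          have h' := congrArg star hBQ
          rw [Matrix.star_mul, Matrix.star_mul, hDBH] at h'
          rwa [Matrix.star_eq_conjTranspose B, hBh.eq] at h'
        rw [hQB]; noncomm_ring
    _ = X * B := by conv_rhs => rw [hXY]
                    noncomm_ring

/-- `D_{W*}(I + U'W*)⁻¹ D_{W*} (I - UW*)⁻¹ = I`, i.e. the pointwise
identity underlying `J'_W J_W = I` for the generalized Crofoot transform. -/
theorem crofoot_inverse_map {d : ℕ} (W U DW DWs : Matrix (Fin d) (Fin d) ℂ)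
    (hW : ‖W‖ < 1) (hU1 : Uᴴ * U = 1) (hU2 : U * Uᴴ = 1)
    (hDW : DW.PosSemidef) (hDW2 : DW ^ 2 = 1 - Wᴴ * W)
    (hDWs : DWs.PosSemidef) (hDWs2 : DWs ^ 2 = 1 - W * Wᴴ) :
    DWs * (1 + (-W + DWs * (1 - U * Wᴴ)⁻¹ * U * DW) * Wᴴ)⁻¹ * DWs *
      (1 - U * Wᴴ)⁻¹ = 1 := by
  have hWH : ‖Wᴴ‖ = ‖W‖ := Matrix.l2_opNorm_conjTranspose W
  -- ‖U * Wᴴ‖ = ‖Wᴴ‖ via the C*-identity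
  have hUW : ‖U * Wᴴ‖ < 1 := by
    have h1 : ‖U * Wᴴ‖ * ‖U * Wᴴ‖ = ‖Wᴴ‖ * ‖Wᴴ‖ := by
      rw [← CStarRing.norm_star_mul_self (x := U * Wᴴ),
        ← CStarRing.norm_star_mul_self (x := Wᴴ)]
      congr 1
      simp only [Matrix.star_eq_conjTranspose, Matrix.conjTranspose_mul,
        Matrix.conjTranspose_conjTranspose]
      calc W * Uᴴ * (U * Wᴴ) = W * (Uᴴ * U) * Wᴴ := by noncomm_ring
        _ = W * Wᴴ := by rw [hU1]; simp
    have h2 : ‖U * Wᴴ‖ = ‖Wᴴ‖ := by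
      rcases mul_self_eq_mul_self_iff.mp h1 with h | h
      · exact h
      · have := norm_nonneg (U * Wᴴ); have := norm_nonneg Wᴴ; linarith
    rw [h2, hWH]; exact hW
  -- 1 - U * Wᴴ is a unit
  have hAdet : IsUnit (1 - U * Wᴴ).det := by
    obtain ⟨u, hu⟩ := isUnit_one_sub_of_norm_lt_one hUW
    exact hu ▸ u.isUnit.map (Matrix.detMonoidHom)
  -- DWs is a unit
  have hWWH : ‖W * Wᴴ‖ < 1 := by
    calc ‖W * Wᴴ‖ ≤ ‖W‖ * ‖Wᴴ‖ := norm_mul_le _ _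
      _ < 1 := by rw [hWH]; nlinarith [norm_nonneg W]
  have hDdet : IsUnit DWs.det := by
    have h1 : IsUnit (1 - W * Wᴴ).det := by
      obtain ⟨u, hu⟩ := isUnit_one_sub_of_norm_lt_one hWWH
      exact hu ▸ u.isUnit.map (Matrix.detMonoidHom)
    have : DWs.det * DWs.det = (1 - W * Wᴴ).det := by
      rw [← Matrix.det_mul, ← sq, ← hDWs2, sq]
    exact isUnit_of_mul_isUnit_left (this ▸ h1)
  -- intertwining: DW * Wᴴ = Wᴴ * DWs
  have hint : DW * Wᴴ = Wᴴ * DWs := by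
    apply psd_sqrt_intertwine_s5 _ _ _ hDW hDWs
    have h1 : DW * DW = 1 - Wᴴ * W := by rw [← sq]; exact hDW2
    have h2 : DWs * DWs = 1 - W * Wᴴ := by rw [← sq]; exact hDWs2
    rw [h1, h2]; noncomm_ring
  set A : Matrix (Fin d) (Fin d) ℂ := 1 - U * Wᴴ with hA
  have hAA : A * A⁻¹ = 1 := Matrix.mul_nonsing_inv _ hAdet
  have hAA' : A⁻¹ * A = 1 := Matrix.nonsing_inv_mul _ hAdet
  have hDD : DWs * DWs⁻¹ = 1 := Matrix.mul_nonsing_inv _ hDdet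
  have hDD' : DWs⁻¹ * DWs = 1 := Matrix.nonsing_inv_mul _ hDdet
  -- key simplification: 1 + U'Wᴴ = DWs * A⁻¹ * DWs
  have hkey : 1 + (-W + DWs * A⁻¹ * U * DW) * Wᴴ = DWs * A⁻¹ * DWs := by
    have h2 : DWs * DWs = 1 - W * Wᴴ := by rw [← sq]; exact hDWs2
    have hUWD : A⁻¹ * (U * Wᴴ) * DWs = (A⁻¹ - 1) * DWs := by
      have : A⁻¹ * (U * Wᴴ) = A⁻¹ - 1 := by
        calc A⁻¹ * (U * Wᴴ) = A⁻¹ * (U * Wᴴ - 1) + A⁻¹ := by noncomm_ring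
          _ = A⁻¹ * (-A) + A⁻¹ := by rw [hA]; noncomm_ring
          _ = -(A⁻¹ * A) + A⁻¹ := by noncomm_ring
          _ = A⁻¹ - 1 := by rw [hAA']; noncomm_ring
      rw [this]
    calc 1 + (-W + DWs * A⁻¹ * U * DW) * Wᴴ
        = (1 - W * Wᴴ) + DWs * (A⁻¹ * U * (DW * Wᴴ)) := by noncomm_ring
      _ = DWs * DWs + DWs * (A⁻¹ * (U * Wᴴ) * DWs) := by rw [h2, hint]; noncomm_ring
      _ = DWs * DWs + DWs * ((A⁻¹ - 1) * DWs) := by rw [hUWD]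
      _ = DWs * A⁻¹ * DWs := by noncomm_ring
  rw [hkey]
  have hinv : (DWs * A⁻¹ * DWs)⁻¹ = DWs⁻¹ * A * DWs⁻¹ := by
    rw [Matrix.mul_inv_rev, Matrix.mul_inv_rev, Matrix.nonsing_inv_nonsing_inv _ hAdet,
      mul_assoc]
  rw [hinv]
  calc DWs * (DWs⁻¹ * A * DWs⁻¹) * DWs * A⁻¹
      = (DWs * DWs⁻¹) * A * (DWs⁻¹ * DWs) * A⁻¹ := by noncomm_ring
    _ = A * A⁻¹ := by rw [hDD, hDD']; noncomm_ring
    _ = 1 := hAA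
end

section
/- Let W be a strict contraction on ℂ^d and A ∈ L(ℂ^d) a contraction with A' = -W + D_{W*}(I - A W*)^{-1} A D_W. Then for any x, y ∈ ℂ^d, ⟨(I - A A*)(I - W A*)^{-1} D_{W*} x, (I - W A*)^{-1} D_{W*} y⟩ = ⟨(I - A'(A')*) x, y⟩. In particular the map x ↦ D_{W*}(I - A W*)^{-1} x transforms the kernel I - AA* into the kernel I - A'(A')*. -/
open scoped Matrix.Norms.L2Operator ComplexOrder
open scoped MatrixOrder
open Matrix Polynomial

private lemma crofoot_aux_aeval_conj {d : ℕ} (U D : Matrix (Fin d) (Fin d) ℂ)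
    (h1 : star U * U = 1) (h2 : U * star U = 1) (p : ℝ[X]) :
    aeval (U * D * star U) p = U * aeval D p * star U := by
  induction p using Polynomial.induction_on' with
  | add p q hp hq => simp [hp, hq, Matrix.mul_add, Matrix.add_mul]
  | monomial n a =>
    have hpow : ∀ n : ℕ, (U * D * star U) ^ n = U * D ^ n * star U := by
      intro n
      induction n with
      | zero => simpa using h2.symm
      | succ k ih =>
        rw [pow_succ, ih, pow_succ]
        calc U * D ^ k * star U * (U * D * star U)
            = U * D ^ k * (star U * U) * (D * star U) := by
              simp only [Matrix.mul_assoc]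
          _ = U * (D ^ k * D) * star U := by rw [h1]; simp only [Matrix.mul_one, Matrix.mul_assoc]
    rw [aeval_monomial, aeval_monomial, hpow, ← Algebra.smul_def, ← Algebra.smul_def,
      Matrix.mul_smul, Matrix.smul_mul]

private lemma crofoot_aux_aeval_diag {d : ℕ} (v : Fin d → ℂ) (p : ℝ[X]) :
    aeval (diagonal v) p = diagonal (fun i => aeval (v i) p) := by
  induction p using Polynomial.induction_on' with
  | add p q hp hq => simp [hp, hq, Matrix.diagonal_add]
  | monomial n a =>
    simp only [aeval_monomial, ← Algebra.smul_def, Matrix.diagonal_pow, Matrix.diagonal_smul]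
    rw [← Matrix.diagonal_smul]; rfl

private lemma crofoot_aux_aeval_eq_sqrt {d : ℕ} {A : Matrix (Fin d) (Fin d) ℂ}
    (hA : A.PosSemidef) (p : ℝ[X])
    (hp : ∀ i, p.eval (hA.1.eigenvalues i) = Real.sqrt (hA.1.eigenvalues i)) :
    aeval A p = CFC.sqrt A := by
  rw [CFC.sqrt_eq_real_sqrt A hA.nonneg, ← cfc_polynomial p A]
  rw [cfcₙ_eq_cfc]
  refine cfc_congr (R := ℝ) (a := A) fun x hx => ?_
  obtain ⟨i, rfl⟩ := hA.1.spectrum_real_eq_range_eigenvalues ▸ hx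
  exact hp i

private lemma crofoot_aux_pow_intertwine {d : ℕ} {M N W : Matrix (Fin d) (Fin d) ℂ}
    (h : N * W = W * M) (n : ℕ) : N ^ n * W = W * M ^ n := by
  induction n with
  | zero => simp
  | succ k ih =>
    rw [pow_succ, pow_succ, Matrix.mul_assoc, h, ← Matrix.mul_assoc, ih, Matrix.mul_assoc]

private lemma crofoot_aux_aeval_intertwine {d : ℕ} {M N W : Matrix (Fin d) (Fin d) ℂ}
    (h : N * W = W * M) (p : ℝ[X]) : aeval N p * W = W * aeval M p := by
  induction p using Polynomial.induction_on' with
  | add p q hp hq => simp [Matrix.add_mul, Matrix.mul_add, hp, hq]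
  | monomial n a =>
    rw [aeval_monomial, aeval_monomial, ← Algebra.smul_def, ← Algebra.smul_def,
      Matrix.smul_mul, Matrix.mul_smul, crofoot_aux_pow_intertwine h]

private lemma crofoot_aux_sqrt_intertwine {d : ℕ} {M N W : Matrix (Fin d) (Fin d) ℂ}
    (hM : M.PosSemidef) (hN : N.PosSemidef) (h : N * W = W * M) :
    CFC.sqrt N * W = W * CFC.sqrt M := by
  classical
  set s : Finset ℝ :=
    (Finset.univ.image hM.1.eigenvalues) ∪ (Finset.univ.image hN.1.eigenvalues) with hs
  set p : ℝ[X] := Lagrange.interpolate s id Real.sqrt with hpdef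
  have hnode : ∀ x ∈ s, p.eval x = Real.sqrt x := fun x hx =>
    Lagrange.eval_interpolate_at_node _ (Set.injOn_id _) hx
  have hMe : aeval M p = CFC.sqrt M :=
    crofoot_aux_aeval_eq_sqrt hM p fun i => hnode _ (by
      simp [hs, Finset.mem_union, Finset.mem_image])
  have hNe : aeval N p = CFC.sqrt N :=
    crofoot_aux_aeval_eq_sqrt hN p fun i => hnode _ (by
      simp [hs, Finset.mem_union, Finset.mem_image])
  rw [← hMe, ← hNe]
  exact crofoot_aux_aeval_intertwine h p

/-- the map `x ↦ D_{W*}(I - AW*)⁻¹x` transforms the kernel `I - AA*`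
into the kernel `I - A'(A')*`:
`⟨(I - AA*)(I - WA*)⁻¹D_{W*}x, (I - WA*)⁻¹D_{W*}y⟩ = ⟨(I - A'(A')*)x, y⟩`. -/
theorem crofoot_kernel_inner_product {d : ℕ} (W A DW DWs : Matrix (Fin d) (Fin d) ℂ)
    (hW : ‖W‖ < 1) (hA : ‖A‖ ≤ 1)
    (hDW : DW.PosSemidef) (hDW2 : DW ^ 2 = 1 - Wᴴ * W)
    (hDWs : DWs.PosSemidef) (hDWs2 : DWs ^ 2 = 1 - W * Wᴴ)
    (x y : EuclideanSpace ℂ (Fin d)) :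
    (inner ℂ
      ((WithLp.equiv 2 (Fin d → ℂ)).symm
        (((1 - A * Aᴴ) * (1 - W * Aᴴ)⁻¹ * DWs) *ᵥ (WithLp.equiv 2 (Fin d → ℂ)) x))
      ((WithLp.equiv 2 (Fin d → ℂ)).symm
        (((1 - W * Aᴴ)⁻¹ * DWs) *ᵥ (WithLp.equiv 2 (Fin d → ℂ)) y)) : ℂ) =
    (inner ℂ
      ((WithLp.equiv 2 (Fin d → ℂ)).symm
        ((1 - (-W + DWs * (1 - A * Wᴴ)⁻¹ * A * DW) *
            (-W + DWs * (1 - A * Wᴴ)⁻¹ * A * DW)ᴴ) *ᵥ (WithLp.equiv 2 (Fin d → ℂ)) x))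
      y : ℂ) := by
  classical
  -- notation
  set C : Matrix (Fin d) (Fin d) ℂ := 1 - A * Wᴴ with hCdef
  set B : Matrix (Fin d) (Fin d) ℂ := 1 - W * Aᴴ with hBdef
  have hBC : Cᴴ = B := by
    simp [hCdef, hBdef, conjTranspose_sub, conjTranspose_mul]
  -- invertibility
  have hCu : IsUnit C := by
    apply isUnit_one_sub_of_norm_lt_one
    have h2 := Matrix.l2_opNorm_mul A Wᴴ
    rw [Matrix.l2_opNorm_conjTranspose] at h2
    nlinarith [norm_nonneg W, norm_nonneg A, norm_nonneg (A * Wᴴ)]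
  have hCd : IsUnit C.det := (Matrix.isUnit_iff_isUnit_det C).mp hCu
  have hBd : IsUnit B.det := by
    rw [← hBC, Matrix.det_conjTranspose]
    exact hCd.star
  -- intertwining
  have hMpsd : (1 - Wᴴ * W).PosSemidef := hDW2 ▸ hDW.pow 2
  have hNpsd : (1 - W * Wᴴ).PosSemidef := hDWs2 ▸ hDWs.pow 2
  have hNW : (1 - W * Wᴴ) * W = W * (1 - Wᴴ * W) := by noncomm_ring
  have hDWsqrt : DW = CFC.sqrt (1 - Wᴴ * W) := by rw [← hDW2, CFC.sqrt_sq DW hDW.nonneg]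
  have hDWssqrt : DWs = CFC.sqrt (1 - W * Wᴴ) := by rw [← hDWs2, CFC.sqrt_sq DWs hDWs.nonneg]
  have hint : W * DW = DWs * W := by
    rw [hDWsqrt, hDWssqrt]
    exact (crofoot_aux_sqrt_intertwine hMpsd hNpsd hNW).symm
  have hDWh : DWᴴ = DW := hDW.1
  have hDWsh : DWsᴴ = DWs := hDWs.1
  have hint' : DW * Wᴴ = Wᴴ * DWs := by
    have h := congrArg conjTranspose hint
    simpa [conjTranspose_mul, hDWh, hDWsh] using h
  have hDW2' : DW * DW = 1 - Wᴴ * W := by rw [← pow_two]; exact hDW2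
  have hDWs2' : DWs * DWs = 1 - W * Wᴴ := by rw [← pow_two]; exact hDWs2
  -- the middle factor
  set Z : Matrix (Fin d) (Fin d) ℂ :=
    1 + W * Aᴴ * B⁻¹ + C⁻¹ * (A * Wᴴ) - C⁻¹ * (A * (1 - Wᴴ * W) * Aᴴ * B⁻¹) with hZdef
  have e1 : C * Z * B = C * B + (C * (W * Aᴴ)) * (B⁻¹ * B) + (C * C⁻¹) * (A * Wᴴ * B)
      - (C * C⁻¹) * (A * (1 - Wᴴ * W) * Aᴴ) * (B⁻¹ * B) := by
    rw [hZdef]; noncomm_ring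
  rw [Matrix.nonsing_inv_mul _ hBd, Matrix.mul_nonsing_inv _ hCd] at e1
  have E : 1 - A * Aᴴ = C * Z * B := by
    rw [e1, hCdef, hBdef]; noncomm_ring
  have E2 : C⁻¹ * (1 - A * Aᴴ) * B⁻¹ = Z := by
    rw [E, Matrix.mul_assoc C Z B, Matrix.nonsing_inv_mul_cancel_left _ _ hCd,
      Matrix.mul_nonsing_inv_cancel_right _ _ hBd]
  -- the transformed defect
  set A' : Matrix (Fin d) (Fin d) ℂ := -W + DWs * C⁻¹ * A * DW with hA'def
  have hA'H : A'ᴴ = -Wᴴ + DW * (Aᴴ * (B⁻¹ * DWs)) := by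
    rw [hA'def, ← hBC, ← Matrix.conjTranspose_nonsing_inv]
    simp [conjTranspose_add, conjTranspose_neg, conjTranspose_mul, hDWh, hDWsh, Matrix.mul_assoc]
  have expA : A' * A'ᴴ =
      W * Wᴴ - (W * DW) * (Aᴴ * (B⁻¹ * DWs)) - (DWs * (C⁻¹ * A)) * (DW * Wᴴ)
        + (DWs * (C⁻¹ * A)) * ((DW * DW) * (Aᴴ * (B⁻¹ * DWs))) := by
    rw [hA'H, hA'def]; noncomm_ring
  have expR : DWs * Z * DWs =
      DWs * DWs + (DWs * W) * (Aᴴ * (B⁻¹ * DWs)) + (DWs * (C⁻¹ * A)) * (Wᴴ * DWs)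
        - (DWs * (C⁻¹ * A)) * ((1 - Wᴴ * W) * (Aᴴ * (B⁻¹ * DWs))) := by
    rw [hZdef]; noncomm_ring
  have F : 1 - A' * A'ᴴ = DWs * Z * DWs := by
    rw [expA, hint, hint', hDW2', expR, hDWs2']
    noncomm_ring
  -- the key matrix identity
  have key : ((1 - A * Aᴴ) * B⁻¹ * DWs)ᴴ * (B⁻¹ * DWs) = (1 - A' * A'ᴴ)ᴴ := by
    have hPH : ((1 - A * Aᴴ) * B⁻¹ * DWs)ᴴ = DWs * (C⁻¹ * (1 - A * Aᴴ)) := by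
      rw [← hBC, ← Matrix.conjTranspose_nonsing_inv]
      simp [conjTranspose_mul, conjTranspose_sub, hDWsh, Matrix.mul_assoc]
    have hRH : (1 - A' * A'ᴴ)ᴴ = 1 - A' * A'ᴴ := by
      simp [conjTranspose_sub, conjTranspose_mul]
    rw [hPH, hRH, F, ← E2]
    simp only [Matrix.mul_assoc]
  -- reduce the inner products to the matrix identity
  simp only [EuclideanSpace.inner_eq_star_dotProduct, Equiv.apply_symm_apply,
    WithLp.equiv_symm_apply, WithLp.ofLp_toLp]
  rw [Matrix.star_mulVec, Matrix.star_mulVec, dotProduct_comm, dotProduct_comm y.ofLp,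
    ← Matrix.dotProduct_mulVec,
    ← Matrix.dotProduct_mulVec, Matrix.mulVec_mulVec, key]
  rfl
end

section
/- Let Θ be a pure matrix-valued inner function, W a strict contraction, Θ' its Crofoot transform, J_W the generalized Crofoot transform, and S_Θ, S_{Θ'} the model operators (compressions of multiplication by z). Then S_{Θ'} J_W f = J_W S_Θ f for every f ∈ 𝒟_*^⊥, the orthogonal complement in K_Θ of 𝒟_* = {(Θ(z)-Θ(0))x/z : x ∈ ℂ^d}. -/
open scoped Matrix.Norms.L2Operator ComplexOrder
open Matrix Metric

private lemma matrix_resolvent_diff {d : ℕ} (A B C : Matrix (Fin d) (Fin d) ℂ)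
    (hX : IsUnit (1 - A * C)) (hY : IsUnit (1 - B * C)) (hZ : IsUnit (1 - C * B)) :
    (1 - A * C)⁻¹ * A - (1 - B * C)⁻¹ * B = (1 - A * C)⁻¹ * (A - B) * (1 - C * B)⁻¹ := by
  letI := hX.invertible
  letI := hY.invertible
  letI := hZ.invertible
  rw [← Matrix.invOf_eq_nonsing_inv (1 - A * C), ← Matrix.invOf_eq_nonsing_inv (1 - B * C),
    ← Matrix.invOf_eq_nonsing_inv (1 - C * B)]
  have h1 : (1 - B * C) * B = B * (1 - C * B) := by noncomm_ring
  have key : ⅟(1 - B * C) * B = B * ⅟(1 - C * B) := by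
    calc ⅟(1 - B * C) * B = ⅟(1 - B * C) * ((1 - B * C) * B * ⅟(1 - C * B)) := by
          rw [h1, mul_invOf_cancel_right]
      _ = B * ⅟(1 - C * B) := by rw [mul_assoc (1 - B * C), invOf_mul_cancel_left]
  rw [key]
  have h2 : A - B = A * (1 - C * B) - (1 - A * C) * B := by noncomm_ring
  rw [h2, mul_sub, invOf_mul_cancel_left, sub_mul, ← mul_assoc, mul_invOf_cancel_right]

/-- `S_{Θ'} J_W f = J_W S_Θ f` for every `f ∈ 𝒟_*^⊥`, the orthogonal
complement in `K_Θ` of `𝒟_* = {(Θ(z) - Θ(0))x/z : x ∈ ℂ^d}`.  The model spaces are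
encoded as inner-product spaces with evaluation maps `ι`, `ι'`; the model operators
`SΘ`, `SΘ'` are characterized by the fact that on `𝒟_*^⊥` they act as
multiplication by `z`; `J` is the generalized Crofoot transform. -/
theorem crofoot_model_operator_intertwining {d : ℕ}
    (W DW DWs : Matrix (Fin d) (Fin d) ℂ) (hW : ‖W‖ < 1)
    (hDW : DW.PosSemidef) (hDW2 : DW ^ 2 = 1 - Wᴴ * W)
    (hDWs : DWs.PosSemidef) (hDWs2 : DWs ^ 2 = 1 - W * Wᴴ)
    (Θ Θ' : ℂ → Matrix (Fin d) (Fin d) ℂ)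
    (hΘ : ∀ z ∈ ball (0 : ℂ) 1, ‖Θ z‖ ≤ 1) (hΘ0 : ‖Θ 0‖ < 1)
    (hΘ' : ∀ z ∈ ball (0 : ℂ) 1,
      Θ' z = -W + DWs * (1 - Θ z * Wᴴ)⁻¹ * Θ z * DW)
    (K K' : Type*) [NormedAddCommGroup K] [InnerProductSpace ℂ K]
    [NormedAddCommGroup K'] [InnerProductSpace ℂ K']
    (ι : K →ₗ[ℂ] (ℂ → (Fin d → ℂ))) (ι' : K' →ₗ[ℂ] (ℂ → (Fin d → ℂ)))
    (hιinj : ∀ g h : K, (∀ z ∈ ball (0 : ℂ) 1, z ≠ 0 → ι g z = ι h z) → g = h)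
    (hι'inj : ∀ g h : K', (∀ z ∈ ball (0 : ℂ) 1, z ≠ 0 → ι' g z = ι' h z) → g = h)
    (J : K ≃ₗᵢ[ℂ] K')
    (hJ : ∀ (f : K), ∀ z ∈ ball (0 : ℂ) 1,
      ι' (J f) z = (DWs * (1 - Θ z * Wᴴ)⁻¹) *ᵥ ι f z)
    (kt : (Fin d → ℂ) → K) (kt' : (Fin d → ℂ) → K')
    (hkt : ∀ x, ∀ z ∈ ball (0 : ℂ) 1, z ≠ 0 →
      ι (kt x) z = z⁻¹ • ((Θ z - Θ 0) *ᵥ x))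
    (hkt' : ∀ y, ∀ z ∈ ball (0 : ℂ) 1, z ≠ 0 →
      ι' (kt' y) z = z⁻¹ • ((Θ' z - Θ' 0) *ᵥ y))
    (SΘ : K →L[ℂ] K) (SΘ' : K' →L[ℂ] K')
    (hS : ∀ f : K, (∀ x, (inner ℂ (kt x) f : ℂ) = 0) →
      ∀ z ∈ ball (0 : ℂ) 1, ι (SΘ f) z = z • ι f z)
    (hS' : ∀ g : K', (∀ y, (inner ℂ (kt' y) g : ℂ) = 0) →
      ∀ z ∈ ball (0 : ℂ) 1, ι' (SΘ' g) z = z • ι' g z)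
    (f : K) (hf : ∀ x, (inner ℂ (kt x) f : ℂ) = 0) :
    SΘ' (J f) = J (SΘ f) := by
  -- invertibility facts
  have hWH : ‖Wᴴ‖ < 1 := by rwa [Matrix.l2_opNorm_conjTranspose]
  have hunit : ∀ z ∈ ball (0 : ℂ) 1, IsUnit (1 - Θ z * Wᴴ) := by
    intro z hz
    have : ‖Θ z * Wᴴ‖ < 1 :=
      lt_of_le_of_lt (Matrix.l2_opNorm_mul _ _)
        (by nlinarith [hΘ z hz, hWH, norm_nonneg (Θ z), norm_nonneg (Wᴴ)])
    exact (Units.oneSub _ this).isUnit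
  have h0ball : (0 : ℂ) ∈ ball (0 : ℂ) 1 := by simp
  have hZ0 : IsUnit (1 - Wᴴ * Θ 0) := by
    have : ‖Wᴴ * Θ 0‖ < 1 :=
      lt_of_le_of_lt (Matrix.l2_opNorm_mul _ _)
        (by nlinarith [hWH, hΘ0, norm_nonneg (Wᴴ), norm_nonneg (Θ 0)])
    exact (Units.oneSub _ this).isUnit
  set G : Matrix (Fin d) (Fin d) ℂ := (1 - Wᴴ * Θ 0)⁻¹ * DW with hG
  -- factor Θ' z - Θ' 0
  have hdiff : ∀ z ∈ ball (0 : ℂ) 1,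
      Θ' z - Θ' 0 = DWs * (1 - Θ z * Wᴴ)⁻¹ * (Θ z - Θ 0) * G := by
    intro z hz
    rw [hΘ' z hz, hΘ' 0 h0ball, hG]
    have := matrix_resolvent_diff (Θ z) (Θ 0) Wᴴ (hunit z hz) (hunit 0 h0ball) hZ0
    calc (-W + DWs * (1 - Θ z * Wᴴ)⁻¹ * Θ z * DW) -
        (-W + DWs * (1 - Θ 0 * Wᴴ)⁻¹ * Θ 0 * DW)
        = DWs * ((1 - Θ z * Wᴴ)⁻¹ * Θ z - (1 - Θ 0 * Wᴴ)⁻¹ * Θ 0) * DW := by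
          noncomm_ring
      _ = DWs * ((1 - Θ z * Wᴴ)⁻¹ * (Θ z - Θ 0) * (1 - Wᴴ * Θ 0)⁻¹) * DW := by rw [this]
      _ = DWs * (1 - Θ z * Wᴴ)⁻¹ * (Θ z - Θ 0) * ((1 - Wᴴ * Θ 0)⁻¹ * DW) := by
          noncomm_ring
  -- kt' y = J (kt (G *ᵥ y))
  have hktJ : ∀ y, kt' y = J (kt (G *ᵥ y)) := by
    intro y
    apply hι'inj
    intro z hz hz0
    rw [hkt' y z hz hz0, hJ _ z hz, hkt _ z hz hz0, Matrix.mulVec_smul,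
      Matrix.mulVec_mulVec, Matrix.mulVec_mulVec, hdiff z hz, Matrix.mul_assoc]
  -- the orthogonality condition transfers
  have hf' : ∀ y, (inner ℂ (kt' y) (J f) : ℂ) = 0 := by
    intro y
    rw [hktJ y, J.inner_map_map]
    exact hf _
  -- conclude
  apply hι'inj
  intro z hz hz0
  rw [hS' (J f) hf' z hz, hJ f z hz, hJ (SΘ f) z hz, hS f hf z hz,
    Matrix.mulVec_smul]
end

section
/- Let Θ be a pure matrix-valued inner function on ℂ^d, W a strict contraction, Θ' its Crofoot transform, and J_W : K_Θ → K_{Θ'} the generalized Crofoot transform. Then the space 𝒯_Θ of matrix-valued truncated Toeplitz operators on K_Θ equals J_W* 𝒯_{Θ'} J_W, where 𝒯_{Θ'} is the corresponding space on K_{Θ'}. -/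
open scoped Matrix.Norms.L2Operator ComplexOrder
open Matrix Metric

lemma crofoot_aux {d : ℕ} (W DWs : Matrix (Fin d) (Fin d) ℂ) (hW : ‖W‖ < 1)
    (hDWs2 : DWs ^ 2 = 1 - W * Wᴴ) (Θz : Matrix (Fin d) (Fin d) ℂ)
    (hΘz : ‖Θz‖ ≤ 1) :
    Function.Injective (fun x : Fin d → ℂ => (DWs * (1 - Θz * Wᴴ)⁻¹) *ᵥ x) := by
  have hWH : ‖Wᴴ‖ < 1 := by
    have : ‖Wᴴ‖ = ‖W‖ := Matrix.l2_opNorm_conjTranspose W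
    rw [this]; exact hW
  have hW0 : (0:ℝ) ≤ ‖W‖ := norm_nonneg _
  -- 1 - W * Wᴴ is a unit
  have h1 : IsUnit (1 - W * Wᴴ) := by
    have : ‖W * Wᴴ‖ < 1 :=
      lt_of_le_of_lt (norm_mul_le _ _) (by nlinarith [norm_nonneg Wᴴ])
    exact (Units.oneSub _ this).isUnit
  have hDWsU : IsUnit DWs := by
    rw [isUnit_iff_isUnit_det]
    have : IsUnit (DWs.det ^ 2) := by
      rw [← det_pow, hDWs2, ← isUnit_iff_isUnit_det]; exact h1
    exact (isUnit_pow_iff (two_ne_zero)).mp this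
  have h2 : IsUnit (1 - Θz * Wᴴ) := by
    have : ‖Θz * Wᴴ‖ < 1 :=
      lt_of_le_of_lt (norm_mul_le _ _)
        (by nlinarith [norm_nonneg Θz, norm_nonneg Wᴴ])
    exact (Units.oneSub _ this).isUnit
  have h3 : IsUnit ((1 - Θz * Wᴴ)⁻¹) := isUnit_nonsing_inv_iff.mpr h2
  exact mulVec_injective_iff_isUnit.mpr (hDWsU.mul h3)

/-- `𝒯_Θ = J_W* 𝒯_{Θ'} J_W`.  Matrix-valued truncated Toeplitz
operators are encoded, following the characterization of [RT], as the bounded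
operators `A` that are shift invariant: whenever `g = z·f` with both `f, g` in the
model space, `⟨A g, g⟩ = ⟨A f, f⟩`.  The model spaces `K_Θ`, `K_{Θ'}` are encoded
as inner-product spaces with evaluation maps `ι`, `ι'` into functions on the disc,
and `J` is the generalized Crofoot transform (a unitary, so `J* = J⁻¹`). -/
theorem crofoot_truncated_toeplitz {d : ℕ}
    (W DW DWs : Matrix (Fin d) (Fin d) ℂ) (hW : ‖W‖ < 1)
    (hDW : DW.PosSemidef) (hDW2 : DW ^ 2 = 1 - Wᴴ * W)
    (hDWs : DWs.PosSemidef) (hDWs2 : DWs ^ 2 = 1 - W * Wᴴ)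
    (Θ Θ' : ℂ → Matrix (Fin d) (Fin d) ℂ)
    (hΘ : ∀ z ∈ ball (0 : ℂ) 1, ‖Θ z‖ ≤ 1) (hΘ0 : ‖Θ 0‖ < 1)
    (hΘ' : ∀ z ∈ ball (0 : ℂ) 1,
      Θ' z = -W + DWs * (1 - Θ z * Wᴴ)⁻¹ * Θ z * DW)
    (K K' : Type*) [NormedAddCommGroup K] [InnerProductSpace ℂ K]
    [NormedAddCommGroup K'] [InnerProductSpace ℂ K']
    (ι : K →ₗ[ℂ] (ℂ → (Fin d → ℂ))) (ι' : K' →ₗ[ℂ] (ℂ → (Fin d → ℂ)))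
    (hιinj : ∀ g h : K, (∀ z ∈ ball (0 : ℂ) 1, z ≠ 0 → ι g z = ι h z) → g = h)
    (hι'inj : ∀ g h : K', (∀ z ∈ ball (0 : ℂ) 1, z ≠ 0 → ι' g z = ι' h z) → g = h)
    (J : K ≃ₗᵢ[ℂ] K')
    (hJ : ∀ (f : K), ∀ z ∈ ball (0 : ℂ) 1,
      ι' (J f) z = (DWs * (1 - Θ z * Wᴴ)⁻¹) *ᵥ ι f z)
    (A : K →L[ℂ] K) :
    -- `A ∈ 𝒯_Θ` (shift invariance on `K_Θ`) iff `A = J* B J` for some `B ∈ 𝒯_{Θ'}`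
    ((∀ f g : K, (∀ z ∈ ball (0 : ℂ) 1, ι g z = z • ι f z) →
        (inner ℂ (A g) g : ℂ) = inner ℂ (A f) f) ↔
      ∃ B : K' →L[ℂ] K',
        (∀ f g : K', (∀ z ∈ ball (0 : ℂ) 1, ι' g z = z • ι' f z) →
          (inner ℂ (B g) g : ℂ) = inner ℂ (B f) f) ∧
        ∀ f : K, A f = J.symm (B (J f))) := by
  constructor
  · intro hA
    refine ⟨(J.toContinuousLinearEquiv.toContinuousLinearMap.comp
      (A.comp J.symm.toContinuousLinearEquiv.toContinuousLinearMap)), ?_, ?_⟩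
    · intro f' g' hfg
      have hcond : ∀ z ∈ ball (0 : ℂ) 1,
          ι (J.symm g') z = z • ι (J.symm f') z := by
        intro z hz
        have hf := hJ (J.symm f') z hz
        have hg := hJ (J.symm g') z hz
        rw [J.apply_symm_apply] at hf hg
        apply crofoot_aux W DWs hW hDWs2 (Θ z) (hΘ z hz)
        simp only
        rw [← hg, mulVec_smul, ← hf, hfg z hz]
      have := hA (J.symm f') (J.symm g') hcond
      simpa only [ContinuousLinearMap.comp_apply,
        LinearIsometryEquiv.coe_toContinuousLinearEquiv,
        ContinuousLinearEquiv.coe_coe,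
        ← J.inner_map_map, J.apply_symm_apply] using this
    · intro f
      simp
  · rintro ⟨B, hB, hAB⟩ f g hfg
    have hcond : ∀ z ∈ ball (0 : ℂ) 1, ι' (J g) z = z • ι' (J f) z := by
      intro z hz
      rw [hJ g z hz, hJ f z hz, hfg z hz, mulVec_smul]
    have h := hB (J f) (J g) hcond
    have h1 : (inner ℂ (J.symm (B (J g))) g : ℂ) = inner ℂ (B (J g)) (J g) := by
      simpa using J.symm.inner_map_map (B (J g)) (J g)
    have h2 : (inner ℂ (J.symm (B (J f))) f : ℂ) = inner ℂ (B (J f)) (J f) := by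
      simpa using J.symm.inner_map_map (B (J f)) (J f)
    rw [hAB g, hAB f, h1, h2]; exact h
end

section
/- Let A be a bounded operator on K_Θ that is shift invariant, J_W the generalized Crofoot transform from K_Θ to K_{Θ'}. Then J_W A J_W* is shift invariant on K_{Θ'} (i.e., for every g ∈ K_{Θ'} with zg ∈ K_{Θ'}, ⟨J_W A J_W*(zg), zg⟩ = ⟨J_W A J_W* g, g⟩). -/
open scoped Matrix.Norms.L2Operator ComplexOrder
open Matrix Metric

/-- if `A` is a shift-invariant bounded operator on `K_Θ`, then
`J_W A J_W*` is shift invariant on `K_{Θ'}`: for every `g ∈ K_{Θ'}` such that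
`z·g` is again in `K_{Θ'}`, `⟨J A J*(zg), zg⟩ = ⟨J A J* g, g⟩`.  Model spaces are
encoded as inner-product spaces with evaluation maps `ι`, `ι'`, `J` is the
generalized Crofoot transform (unitary, so `J* = J.symm`), and `zg` is encoded as
an element `g'` with `ι' g' z = z • ι' g z` on the disc. -/
theorem crofoot_shift_invariance_transfer {d : ℕ}
    (W DW DWs : Matrix (Fin d) (Fin d) ℂ) (hW : ‖W‖ < 1)
    (hDW : DW.PosSemidef) (hDW2 : DW ^ 2 = 1 - Wᴴ * W)
    (hDWs : DWs.PosSemidef) (hDWs2 : DWs ^ 2 = 1 - W * Wᴴ)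
    (Θ Θ' : ℂ → Matrix (Fin d) (Fin d) ℂ)
    (hΘ : ∀ z ∈ ball (0 : ℂ) 1, ‖Θ z‖ ≤ 1) (hΘ0 : ‖Θ 0‖ < 1)
    (hΘ' : ∀ z ∈ ball (0 : ℂ) 1,
      Θ' z = -W + DWs * (1 - Θ z * Wᴴ)⁻¹ * Θ z * DW)
    (K K' : Type*) [NormedAddCommGroup K] [InnerProductSpace ℂ K]
    [NormedAddCommGroup K'] [InnerProductSpace ℂ K']
    (ι : K →ₗ[ℂ] (ℂ → (Fin d → ℂ))) (ι' : K' →ₗ[ℂ] (ℂ → (Fin d → ℂ)))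
    (hιinj : ∀ g h : K, (∀ z ∈ ball (0 : ℂ) 1, z ≠ 0 → ι g z = ι h z) → g = h)
    (hι'inj : ∀ g h : K', (∀ z ∈ ball (0 : ℂ) 1, z ≠ 0 → ι' g z = ι' h z) → g = h)
    (J : K ≃ₗᵢ[ℂ] K')
    (hJ : ∀ (f : K), ∀ z ∈ ball (0 : ℂ) 1,
      ι' (J f) z = (DWs * (1 - Θ z * Wᴴ)⁻¹) *ᵥ ι f z)
    (A : K →L[ℂ] K)
    (hA : ∀ f g : K, (∀ z ∈ ball (0 : ℂ) 1, ι g z = z • ι f z) →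
      (inner ℂ (A g) g : ℂ) = inner ℂ (A f) f) :
    ∀ g g' : K', (∀ z ∈ ball (0 : ℂ) 1, ι' g' z = z • ι' g z) →
      (inner ℂ (J (A (J.symm g'))) g' : ℂ) = inner ℂ (J (A (J.symm g))) g := by
  intro g g' hg
  set f : K := J.symm g with hf
  set f' : K := J.symm g' with hf'
  -- The Crofoot multiplier is invertible on the disc.
  have hMunit : ∀ z ∈ ball (0 : ℂ) 1, IsUnit (DWs * (1 - Θ z * Wᴴ)⁻¹) := by
    intro z hz
    have h1 : ‖Θ z * Wᴴ‖ < 1 := by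
      calc ‖Θ z * Wᴴ‖ ≤ ‖Θ z‖ * ‖Wᴴ‖ := norm_mul_le _ _
        _ ≤ 1 * ‖Wᴴ‖ := by
            exact mul_le_mul_of_nonneg_right (hΘ z hz) (norm_nonneg _)
        _ = ‖Wᴴ‖ := one_mul _
        _ < 1 := by rwa [Matrix.l2_opNorm_conjTranspose]
    have hNunit : IsUnit (1 - Θ z * Wᴴ) := isUnit_one_sub_of_norm_lt_one h1
    have hWWunit : IsUnit ((1 : Matrix (Fin d) (Fin d) ℂ) - W * Wᴴ) := by
      apply isUnit_one_sub_of_norm_lt_one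
      have hWs : ‖Wᴴ‖ < 1 := by rwa [Matrix.l2_opNorm_conjTranspose]
      calc ‖W * Wᴴ‖ ≤ ‖W‖ * ‖Wᴴ‖ := norm_mul_le _ _
        _ < 1 * 1 := mul_lt_mul'' hW hWs (norm_nonneg _) (norm_nonneg _)
        _ = 1 := one_mul 1
    have hDWsunit : IsUnit DWs := by
      have hsq : IsUnit (DWs * DWs) := by
        rw [← pow_two, hDWs2]; exact hWWunit
      rw [Matrix.isUnit_iff_isUnit_det] at hsq ⊢
      rw [Matrix.det_mul] at hsq
      exact isUnit_of_mul_isUnit_left hsq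
    have hNinv : IsUnit (1 - Θ z * Wᴴ)⁻¹ := by
      rw [Matrix.isUnit_iff_isUnit_det]
      exact Matrix.isUnit_nonsing_inv_det _
        ((Matrix.isUnit_iff_isUnit_det _).mp hNunit)
    exact hDWsunit.mul hNinv
  -- Transfer the shift relation to K via J.
  have hff' : ∀ z ∈ ball (0 : ℂ) 1, ι f' z = z • ι f z := by
    intro z hz
    have h1 : ι' (J f') z = (DWs * (1 - Θ z * Wᴴ)⁻¹) *ᵥ ι f' z := hJ f' z hz
    have h2 : ι' (J f) z = (DWs * (1 - Θ z * Wᴴ)⁻¹) *ᵥ ι f z := hJ f z hz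
    have h3 : ι' g' z = z • ι' g z := hg z hz
    rw [hf', LinearIsometryEquiv.apply_symm_apply] at h1
    rw [hf, LinearIsometryEquiv.apply_symm_apply] at h2
    have key : (DWs * (1 - Θ z * Wᴴ)⁻¹) *ᵥ ι f' z
        = (DWs * (1 - Θ z * Wᴴ)⁻¹) *ᵥ (z • ι f z) := by
      rw [← h1, h3, h2, Matrix.mulVec_smul]
    exact Matrix.mulVec_injective_iff_isUnit.mpr (hMunit z hz) key
  -- Apply shift invariance of A and unitarity of J.
  have hAff : (inner ℂ (A f') f' : ℂ) = inner ℂ (A f) f := hA f f' hff'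
  have hJf' : J f' = g' := by rw [hf']; exact J.apply_symm_apply g'
  have hJf : J f = g := by rw [hf]; exact J.apply_symm_apply g
  have e1 : (inner ℂ (J (A f')) g' : ℂ) = inner ℂ (A f') f' := by
    rw [← hJf']; exact J.inner_map_map _ _
  have e2 : (inner ℂ (J (A f)) g : ℂ) = inner ℂ (A f) f := by
    rw [← hJf]; exact J.inner_map_map _ _
  rw [e1, e2, hAff]
end

section
/- Let Γ be a conjugation on ℂ^d, W a strict contraction with ΓW* = WΓ, and A ∈ L(ℂ^d) a contraction with ΓAΓ = A*. Define A' = -W + D_{W*}(I - AW*)^{-1}AD_W. Then ΓA'Γ = (A')*. -/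
open scoped Matrix.Norms.L2Operator ComplexOrder
open Matrix

open scoped InnerProductSpace
set_option maxHeartbeats 1000000

variable {d : ℕ}

lemma toEL_mul (M N : Matrix (Fin d) (Fin d) ℂ) (x : EuclideanSpace ℂ (Fin d)) :
    toEuclideanLin (M * N) x = toEuclideanLin M (toEuclideanLin N x) := by
  simp [Matrix.toEuclideanLin_apply, Matrix.mulVec_mulVec]

lemma toEL_one (x : EuclideanSpace ℂ (Fin d)) :
    toEuclideanLin (1 : Matrix (Fin d) (Fin d) ℂ) x = x := by
  simp [Matrix.toEuclideanLin_apply]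

lemma conj_inner (Γ : EuclideanSpace ℂ (Fin d) →ₛₗ[starRingEnd ℂ] EuclideanSpace ℂ (Fin d))
    (hΓiso : ∀ x, ‖Γ x‖ = ‖x‖) (u v : EuclideanSpace ℂ (Fin d)) :
    ⟪Γ u, Γ v⟫_ℂ = ⟪v, u⟫_ℂ := by
  rw [← inner_conj_symm v u]
  rw [inner_eq_sum_norm_sq_div_four (Γ u) (Γ v), inner_eq_sum_norm_sq_div_four u v]
  have h1 : Γ u + Γ v = Γ (u + v) := (map_add Γ u v).symm
  have h2 : Γ u - Γ v = Γ (u - v) := (map_sub Γ u v).symm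
  have h3 : Γ u - Complex.I • Γ v = Γ (u + Complex.I • v) := by
    rw [map_add, LinearMap.map_smulₛₗ]
    simp [sub_eq_add_neg, Complex.conj_I, RCLike.I_to_complex]
  have h4 : Γ u + Complex.I • Γ v = Γ (u - Complex.I • v) := by
    rw [map_sub, LinearMap.map_smulₛₗ]
    simp [sub_eq_add_neg, Complex.conj_I, RCLike.I_to_complex]
  simp only [RCLike.I_to_complex]
  rw [h1, h2, h3, h4, hΓiso, hΓiso, hΓiso, hΓiso]
  simp only [map_div₀, map_add, map_sub, _root_.map_mul, map_pow, map_neg, Complex.conj_ofReal, RCLike.conj_ofReal,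
    Complex.conj_I, map_ofNat]
  ring

lemma gamma_sqrt (Γ : EuclideanSpace ℂ (Fin d) →ₛₗ[starRingEnd ℂ] EuclideanSpace ℂ (Fin d))
    (hΓiso : ∀ x, ‖Γ x‖ = ‖x‖) (hΓinv : ∀ x, Γ (Γ x) = x)
    (DW DWs : Matrix (Fin d) (Fin d) ℂ) (hDW : DW.PosSemidef) (hDWs : DWs.PosSemidef)
    (hsq : ∀ x, Γ (toEuclideanLin (DW ^ 2) (Γ x)) = toEuclideanLin (DWs ^ 2) x) :
    ∀ x, Γ (toEuclideanLin DW x) = toEuclideanLin DWs (Γ x) := by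
  have hinner := conj_inner Γ hΓiso
  have hDWsym : (toEuclideanLin DW).IsSymmetric :=
    (Matrix.isHermitian_iff_isSymmetric).mp hDW.1
  let L : EuclideanSpace ℂ (Fin d) →ₗ[ℂ] EuclideanSpace ℂ (Fin d) :=
  { toFun := fun x => Γ (toEuclideanLin DW (Γ x))
    map_add' := by intro x y; simp [map_add]
    map_smul' := by
      intro c x
      simp only [LinearMap.map_smulₛₗ, _root_.map_smul, RingHom.id_apply,
        Complex.conj_conj, starRingEnd_apply, star_star] }
  have hLapp : ∀ x, L x = Γ (toEuclideanLin DW (Γ x)) := fun _ => rfl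
  set B : Matrix (Fin d) (Fin d) ℂ := toEuclideanLin.symm L with hBdef
  have hB : toEuclideanLin B = L := toEuclideanLin.apply_symm_apply L
  have hBsym : (toEuclideanLin B).IsSymmetric := by
    rw [hB]
    intro x y
    rw [hLapp, hLapp]
    calc ⟪Γ (toEuclideanLin DW (Γ x)), y⟫_ℂ
        = ⟪Γ (toEuclideanLin DW (Γ x)), Γ (Γ y)⟫_ℂ := by rw [hΓinv]
      _ = ⟪Γ y, toEuclideanLin DW (Γ x)⟫_ℂ := hinner _ _
      _ = ⟪toEuclideanLin DW (Γ y), Γ x⟫_ℂ := (hDWsym (Γ y) (Γ x)).symm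
      _ = ⟪Γ (Γ (toEuclideanLin DW (Γ y))), Γ x⟫_ℂ := by rw [hΓinv]
      _ = ⟪x, Γ (toEuclideanLin DW (Γ y))⟫_ℂ := hinner _ _
  have hBherm : B.IsHermitian := (Matrix.isHermitian_iff_isSymmetric).mpr hBsym
  have hBpsd : B.PosSemidef := by
    refine Matrix.PosSemidef.of_dotProduct_mulVec_nonneg hBherm fun x => ?_
    have e1 : star x ⬝ᵥ B *ᵥ x =
        ⟪(WithLp.equiv 2 _).symm x, toEuclideanLin B ((WithLp.equiv 2 _).symm x)⟫_ℂ := by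
      rw [EuclideanSpace.inner_eq_star_dotProduct, dotProduct_comm]; rfl
    rw [e1, hB, hLapp]
    set y := Γ ((WithLp.equiv 2 _).symm x) with hy
    have e2 : ⟪(WithLp.equiv 2 _).symm x, Γ (toEuclideanLin DW y)⟫_ℂ
        = ⟪toEuclideanLin DW y, y⟫_ℂ := by
      conv_lhs => rw [← hΓinv ((WithLp.equiv 2 _).symm x)]
      rw [hinner]
    rw [e2, hDWsym y y]
    rw [EuclideanSpace.inner_eq_star_dotProduct, dotProduct_comm]
    exact hDW.dotProduct_mulVec_nonneg _
  have hBsq : B ^ 2 = DWs ^ 2 := by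
    apply toEuclideanLin.injective
    refine LinearMap.ext fun x => ?_
    have : toEuclideanLin (B ^ 2) x = L (L x) := by
      rw [pow_two, toEL_mul, hB]
    rw [this, hLapp, hLapp, hΓinv, ← toEL_mul, ← pow_two]
    exact hsq x
  have hBeq : B = DWs := by
    open scoped MatrixOrder in
    exact (CFC.sq_eq_sq_iff B DWs (Matrix.nonneg_iff_posSemidef.mpr hBpsd)
      (Matrix.nonneg_iff_posSemidef.mpr hDWs)).mp hBsq
  intro x
  calc Γ (toEuclideanLin DW x) = Γ (toEuclideanLin DW (Γ (Γ x))) := by rw [hΓinv]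
    _ = L (Γ x) := rfl
    _ = toEuclideanLin B (Γ x) := by rw [hB]
    _ = toEuclideanLin DWs (Γ x) := by rw [hBeq]

lemma gamma_mul (Γ : EuclideanSpace ℂ (Fin d) →ₛₗ[starRingEnd ℂ] EuclideanSpace ℂ (Fin d))
    (M M' N N' : Matrix (Fin d) (Fin d) ℂ)
    (hM : ∀ x, Γ (toEuclideanLin M x) = toEuclideanLin M' (Γ x))
    (hN : ∀ x, Γ (toEuclideanLin N x) = toEuclideanLin N' (Γ x)) :
    ∀ x, Γ (toEuclideanLin (M * N) x) = toEuclideanLin (M' * N') (Γ x) := by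
  intro x
  rw [toEL_mul, hM, hN, ← toEL_mul]

/-- if `Γ` is a conjugation, `ΓW* = WΓ`, and `A` is a contraction
with `ΓAΓ = A*`, then the Crofoot transform `A'` satisfies `ΓA'Γ = (A')*`
(equivalently `ΓA' = (A')*Γ`). -/
theorem conjugation_crofoot_symmetry {d : ℕ} (W A DW DWs : Matrix (Fin d) (Fin d) ℂ)
    (Γ : EuclideanSpace ℂ (Fin d) →ₛₗ[starRingEnd ℂ] EuclideanSpace ℂ (Fin d))
    (hΓiso : ∀ x, ‖Γ x‖ = ‖x‖) (hΓinv : ∀ x, Γ (Γ x) = x)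
    (hW : ‖W‖ < 1) (hA : ‖A‖ ≤ 1)
    (hDW : DW.PosSemidef) (hDW2 : DW ^ 2 = 1 - Wᴴ * W)
    (hDWs : DWs.PosSemidef) (hDWs2 : DWs ^ 2 = 1 - W * Wᴴ)
    (hΓW : ∀ x, Γ (toEuclideanLin Wᴴ x) = toEuclideanLin W (Γ x))
    (hΓA : ∀ x, Γ (toEuclideanLin A x) = toEuclideanLin Aᴴ (Γ x)) :
    ∀ x, Γ (toEuclideanLin (-W + DWs * (1 - A * Wᴴ)⁻¹ * A * DW) x) =
      toEuclideanLin (-W + DWs * (1 - A * Wᴴ)⁻¹ * A * DW)ᴴ (Γ x) := by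
  -- reversed commutation relations
  have hΓW' : ∀ x, Γ (toEuclideanLin W x) = toEuclideanLin Wᴴ (Γ x) := by
    intro x
    have := congrArg Γ (hΓW (Γ x))
    rw [hΓinv, hΓinv] at this
    exact this.symm
  have hΓA' : ∀ x, Γ (toEuclideanLin Aᴴ x) = toEuclideanLin A (Γ x) := by
    intro x
    have := congrArg Γ (hΓA (Γ x))
    rw [hΓinv, hΓinv] at this
    exact this.symm
  -- D commutation
  have hΓDW : ∀ x, Γ (toEuclideanLin DW x) = toEuclideanLin DWs (Γ x) := by
    apply gamma_sqrt Γ hΓiso hΓinv DW DWs hDW hDWs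
    intro x
    rw [hDW2, hDWs2]
    have h1 : ∀ y, Γ (toEuclideanLin (Wᴴ * W) y) = toEuclideanLin (W * Wᴴ) (Γ y) :=
      gamma_mul Γ _ _ _ _ hΓW hΓW'
    simp only [sub_eq_add_neg, map_add, map_neg, LinearMap.add_apply, LinearMap.neg_apply]
    rw [toEL_one, toEL_one, h1, hΓinv]
  have hΓDWs : ∀ x, Γ (toEuclideanLin DWs x) = toEuclideanLin DW (Γ x) := by
    intro x
    have := congrArg Γ (hΓDW (Γ x))
    rw [hΓinv, hΓinv] at this
    exact this.symm
  -- invertibility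
  have hWH : ‖Wᴴ‖ = ‖W‖ := Matrix.l2_opNorm_conjTranspose W
  have hAH : ‖Aᴴ‖ = ‖A‖ := Matrix.l2_opNorm_conjTranspose A
  have hMn : ‖A * Wᴴ‖ < 1 := by
    calc ‖A * Wᴴ‖ ≤ ‖A‖ * ‖Wᴴ‖ := norm_mul_le _ _
      _ ≤ 1 * ‖W‖ := by rw [hWH]; exact mul_le_mul_of_nonneg_right hA (norm_nonneg _)
      _ < 1 := by rwa [one_mul]
  have hNn : ‖Aᴴ * W‖ < 1 := by
    calc ‖Aᴴ * W‖ ≤ ‖Aᴴ‖ * ‖W‖ := norm_mul_le _ _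
      _ ≤ 1 * ‖W‖ := by rw [hAH]; exact mul_le_mul_of_nonneg_right hA (norm_nonneg _)
      _ < 1 := by rwa [one_mul]
  have hPn : ‖W * Aᴴ‖ < 1 := by
    calc ‖W * Aᴴ‖ ≤ ‖W‖ * ‖Aᴴ‖ := norm_mul_le _ _
      _ ≤ ‖W‖ * 1 := by rw [hAH]; exact mul_le_mul_of_nonneg_left hA (norm_nonneg _)
      _ < 1 := by rwa [mul_one]
  set M : Matrix (Fin d) (Fin d) ℂ := 1 - A * Wᴴ with hMdef
  set N : Matrix (Fin d) (Fin d) ℂ := 1 - Aᴴ * W with hNdef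
  set P : Matrix (Fin d) (Fin d) ℂ := 1 - W * Aᴴ with hPdef
  have hMd : IsUnit M.det := (Matrix.isUnit_iff_isUnit_det _).mp (Units.oneSub _ hMn).isUnit
  have hNd : IsUnit N.det := (Matrix.isUnit_iff_isUnit_det _).mp (Units.oneSub _ hNn).isUnit
  have hPd : IsUnit P.det := (Matrix.isUnit_iff_isUnit_det _).mp (Units.oneSub _ hPn).isUnit
  -- Γ M = N Γ
  have hΓM : ∀ x, Γ (toEuclideanLin M x) = toEuclideanLin N (Γ x) := by
    intro x
    have h1 : ∀ y, Γ (toEuclideanLin (A * Wᴴ) y) = toEuclideanLin (Aᴴ * W) (Γ y) :=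
      gamma_mul Γ _ _ _ _ hΓA hΓW
    rw [hMdef, hNdef]
    simp only [sub_eq_add_neg, map_add, map_neg, LinearMap.add_apply, LinearMap.neg_apply]
    rw [toEL_one, toEL_one, h1]
  -- Γ M⁻¹ = N⁻¹ Γ
  have hΓMinv : ∀ x, Γ (toEuclideanLin M⁻¹ x) = toEuclideanLin N⁻¹ (Γ x) := by
    intro x
    have h1 : toEuclideanLin N (Γ (toEuclideanLin M⁻¹ x)) = Γ x := by
      rw [← hΓM, ← toEL_mul, Matrix.mul_nonsing_inv M hMd, toEL_one]
    have h2 := congrArg (toEuclideanLin N⁻¹) h1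
    rwa [← toEL_mul, Matrix.nonsing_inv_mul N hNd, toEL_one] at h2
  -- commuting identity
  have hcomm : N⁻¹ * Aᴴ = Aᴴ * P⁻¹ := by
    have h1 : Aᴴ * P = N * Aᴴ := by
      rw [hPdef, hNdef]; noncomm_ring
    calc N⁻¹ * Aᴴ = N⁻¹ * (Aᴴ * P * P⁻¹) := by
          rw [Matrix.mul_assoc, Matrix.mul_nonsing_inv P hPd, Matrix.mul_one]
      _ = N⁻¹ * N * (Aᴴ * P⁻¹) := by rw [h1]; noncomm_ring
      _ = Aᴴ * P⁻¹ := by rw [Matrix.nonsing_inv_mul N hNd, Matrix.one_mul]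
  -- conjTranspose of the Crofoot transform
  have hQ : (-W + DWs * M⁻¹ * A * DW)ᴴ = -Wᴴ + DW * N⁻¹ * Aᴴ * DWs := by
    have hMH : Mᴴ = P := by
      rw [hMdef, hPdef]
      simp [Matrix.conjTranspose_sub, Matrix.conjTranspose_mul]
    rw [Matrix.conjTranspose_add, Matrix.conjTranspose_neg]
    rw [Matrix.conjTranspose_mul, Matrix.conjTranspose_mul, Matrix.conjTranspose_mul]
    rw [Matrix.conjTranspose_nonsing_inv, hMH, hDW.1.eq, hDWs.1.eq]
    rw [← Matrix.mul_assoc, ← Matrix.mul_assoc]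
    congr 1
    rw [Matrix.mul_assoc DW, ← hcomm, ← Matrix.mul_assoc]
  -- assemble
  intro x
  rw [hQ]
  have hrest : ∀ y, Γ (toEuclideanLin (DWs * M⁻¹ * A * DW) y) =
      toEuclideanLin (DW * N⁻¹ * Aᴴ * DWs) (Γ y) :=
    gamma_mul Γ _ _ _ _ (gamma_mul Γ _ _ _ _ (gamma_mul Γ _ _ _ _ hΓDWs hΓMinv) hΓA) hΓDW
  simp only [map_add, map_neg, LinearMap.add_apply, LinearMap.neg_apply]
  rw [hΓW', hrest]
end
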